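/- arXiv:1210.3906 — 8 statements merged into one kernel-verified Lean document; each statement's English description precedes it below -/
import Mathlib

section
/- Let M be a v×b matrix with natural-number entries all at most 2 such that (i) every row of M contains exactly one entry equal to 2, and (ii) for every pair of distinct rows i ≠ j, the sum over all columns h of M(i,h)·M(j,h) equals 2. Then M contains none of the ICI patterns of length 6, 8, or 10: no entry of M is ≥ 3, no row and no column of M contains two entries equal to 2, and M does not contain the pattern [[2,1],[1,1]] (nor its transpose). -/
open Matrix Finset

/-- `P` has `Q` as a (row/column-permuted) entrywise sub-pattern. -/
def containsSub {J L m n : ℕ} (P : Matrix (Fin J) (Fin L) ℕ)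
    (Q : Matrix (Fin m) (Fin n) ℕ) : Prop :=
  ∃ r : Fin m → Fin J, ∃ c : Fin n → Fin L,
    Function.Injective r ∧ Function.Injective c ∧
    ∀ i j, Q i j ≤ P (r i) (c j)

/-- `P` contains the pattern `Q` or its transpose. -/
def containsPat {J L m n : ℕ} (P : Matrix (Fin J) (Fin L) ℕ)
    (Q : Matrix (Fin m) (Fin n) ℕ) : Prop :=
  containsSub P Q ∨ containsSub P Qᵀ

/-- ICI pattern of length 6. -/
def pat6 : Matrix (Fin 1) (Fin 1) ℕ := !![3]
/-- ICI pattern of length 8. -/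
def pat8 : Matrix (Fin 1) (Fin 2) ℕ := !![2, 2]
/-- ICI pattern of length 10. -/
def pat10 : Matrix (Fin 2) (Fin 2) ℕ := !![2, 1; 1, 1]
/-- First ICI pattern of length 12. -/
def pat12a : Matrix (Fin 2) (Fin 2) ℕ := !![2, 1; 0, 2]
/-- Second ICI pattern of length 12. -/
def pat12b : Matrix (Fin 2) (Fin 3) ℕ := !![2, 1, 1; 0, 1, 1]
/-- Third ICI pattern of length 12 (the 2×3 all-ones matrix). -/
def pat12c : Matrix (Fin 2) (Fin 3) ℕ := !![1, 1, 1; 1, 1, 1]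

/-- `P` avoids inevitable cycles of length `< 10`. -/
def avoidsLt10 {J L : ℕ} (P : Matrix (Fin J) (Fin L) ℕ) : Prop :=
  ¬ containsPat P pat6 ∧ ¬ containsPat P pat8

/-- `P` avoids inevitable cycles of length `< 12`. -/
def avoidsLt12 {J L : ℕ} (P : Matrix (Fin J) (Fin L) ℕ) : Prop :=
  avoidsLt10 P ∧ ¬ containsPat P pat10

/-- `P` avoids inevitable cycles of length `< 14`. -/
def avoidsLt14 {J L : ℕ} (P : Matrix (Fin J) (Fin L) ℕ) : Prop :=
  avoidsLt12 P ∧ ¬ containsPat P pat12a ∧ ¬ containsPat P pat12b ∧ ¬ containsPat P pat12c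

/-- The number of entries of `P` equal to `2`. -/
def numTwos {J L : ℕ} (P : Matrix (Fin J) (Fin L) ℕ) : ℕ :=
  (Finset.univ.filter (fun p : Fin J × Fin L => P p.1 p.2 = 2)).card

/-- `P` is `(d_v, d_c)`-regular: every column sums to `d_v`, every row to `d_c`. -/
def protoRegular {J L : ℕ} (P : Matrix (Fin J) (Fin L) ℕ) (dv dc : ℕ) : Prop :=
  (∀ l : Fin L, ∑ j : Fin J, P j l = dv) ∧ (∀ j : Fin J, ∑ l : Fin L, P j l = dc)

theorem stmt_1 {v b : ℕ} (M : Matrix (Fin v) (Fin b) ℕ)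
    (hle : ∀ i h, M i h ≤ 2)
    (hrow : ∀ i : Fin v, ∃! h : Fin b, M i h = 2)
    (hpair : ∀ i j : Fin v, i ≠ j → ∑ h : Fin b, M i h * M j h = 2) :
    (∀ i h, ¬ 3 ≤ M i h) ∧
    (∀ i : Fin v, ∀ h₁ h₂ : Fin b, h₁ ≠ h₂ → ¬ (M i h₁ = 2 ∧ M i h₂ = 2)) ∧
    (∀ h : Fin b, ∀ i₁ i₂ : Fin v, i₁ ≠ i₂ → ¬ (M i₁ h = 2 ∧ M i₂ h = 2)) ∧
    ¬ containsPat M pat10 := by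
  have key : ∀ (i j : Fin v) (h₁ h₂ : Fin b), i ≠ j → h₁ ≠ h₂ →
      2 ≤ M i h₁ → 1 ≤ M i h₂ → 1 ≤ M j h₁ → 1 ≤ M j h₂ → False := by
    intro i j h₁ h₂ hij hh a1 a2 b1 b2
    have hsub : ({h₁, h₂} : Finset (Fin b)) ⊆ Finset.univ := Finset.subset_univ _
    have hsum : M i h₁ * M j h₁ + M i h₂ * M j h₂ ≤ ∑ h : Fin b, M i h * M j h := by
      have := Finset.sum_le_sum_of_subset (f := fun h => M i h * M j h) hsub
      rwa [Finset.sum_pair hh] at this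
    have h3 : 3 ≤ M i h₁ * M j h₁ + M i h₂ * M j h₂ := by
      have : 2 ≤ M i h₁ * M j h₁ := le_trans (by omega) (Nat.mul_le_mul a1 b1)
      have : 1 ≤ M i h₂ * M j h₂ := le_trans (by omega) (Nat.mul_le_mul a2 b2)
      omega
    rw [hpair i j hij] at hsum
    omega
  refine ⟨fun i h h3 => by have := hle i h; omega, ?_, ?_, ?_⟩
  · intro i h₁ h₂ hne ⟨e1, e2⟩
    obtain ⟨h, _, huniq⟩ := hrow i
    exact hne ((huniq h₁ e1).trans (huniq h₂ e2).symm)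
  · intro h i₁ i₂ hne ⟨e1, e2⟩
    have := hpair i₁ i₂ hne
    have hsub : ({h} : Finset (Fin b)) ⊆ Finset.univ := Finset.subset_univ _
    have hsum := Finset.sum_le_sum_of_subset (f := fun x => M i₁ x * M i₂ x) hsub
    rw [Finset.sum_singleton, this] at hsum
    rw [e1, e2] at hsum; omega
  · rintro (⟨r, c, hr, hc, hq⟩ | ⟨r, c, hr, hc, hq⟩)
    · have q00 := hq 0 0; have q01 := hq 0 1; have q10 := hq 1 0; have q11 := hq 1 1
      simp [pat10, Matrix.cons_val_zero, Matrix.cons_val_one] at q00 q01 q10 q11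
      exact key (r 0) (r 1) (c 0) (c 1) (fun h => absurd (hr h) (by decide))
        (fun h => absurd (hc h) (by decide)) q00 q01 q10 q11
    · have q00 := hq 0 0; have q01 := hq 0 1; have q10 := hq 1 0; have q11 := hq 1 1
      simp [pat10, Matrix.transpose_apply, Matrix.cons_val_zero, Matrix.cons_val_one] at q00 q01 q10 q11
      exact key (r 0) (r 1) (c 0) (c 1) (fun h => absurd (hr h) (by decide))
        (fun h => absurd (hc h) (by decide)) q00 q01 q10 q11
end

section
/- Let d_c ≥ 4 and let P be a J×L protograph that is (3,d_c)-regular (every column sums to 3 and every row sums to d_c) and avoids inevitable cycles of length less than 14, i.e., P contains none of the ICI patterns of length 6, 8, 10, or 12 (nor their transposes). Then the number n2(P) of entries of P equal to 2 satisfies n2(P) ≤ J − 2. -/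
open Matrix Finset

section helperlemmas

lemma inj1 {α : Type*} {x : α} : Function.Injective ![x] :=
  fun a b _ => Subsingleton.elim a b

lemma inj2' {α : Type*} {x y : α} (h : x ≠ y) : Function.Injective ![x, y] := by
  intro a b hab
  fin_cases a <;> fin_cases b <;> simp_all

lemma inj3' {α : Type*} {x y z : α} (hxy : x ≠ y) (hxz : x ≠ z) (hyz : y ≠ z) :
    Function.Injective ![x, y, z] := by
  intro a b hab
  fin_cases a <;> fin_cases b <;> simp_all

section pats
variable {J L : ℕ} {P : Matrix (Fin J) (Fin L) ℕ}

lemma no6 (h : ¬ containsPat P pat6) : ∀ i l, P i l ≤ 2 := by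
  intro i l
  by_contra hc
  exact h (Or.inl ⟨![i], ![l], inj1, inj1, by
    intro a b; fin_cases a; fin_cases b; simp [pat6]; omega⟩)

lemma no8row (h : ¬ containsPat P pat8) {i : Fin J} {l1 l2 : Fin L}
    (hne : l1 ≠ l2) (h1 : 2 ≤ P i l1) (h2 : 2 ≤ P i l2) : False :=
  h (Or.inl ⟨![i], ![l1, l2], inj1, inj2' hne, by
    intro a b; fin_cases a <;> fin_cases b <;> simpa [pat8]⟩)

lemma no8col (h : ¬ containsPat P pat8) {i1 i2 : Fin J} {l : Fin L}
    (hne : i1 ≠ i2) (h1 : 2 ≤ P i1 l) (h2 : 2 ≤ P i2 l) : False :=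
  h (Or.inr ⟨![i1, i2], ![l], inj2' hne, inj1, by
    intro a b; fin_cases a <;> fin_cases b <;> simpa [pat8]⟩)

lemma no10 (h : ¬ containsPat P pat10) {i1 i2 : Fin J} {l1 l2 : Fin L}
    (hi : i1 ≠ i2) (hl : l1 ≠ l2) (h11 : 2 ≤ P i1 l1) (h12 : 1 ≤ P i1 l2)
    (h21 : 1 ≤ P i2 l1) (h22 : 1 ≤ P i2 l2) : False :=
  h (Or.inl ⟨![i1, i2], ![l1, l2], inj2' hi, inj2' hl, by
    intro a b; fin_cases a <;> fin_cases b <;> simpa [pat10]⟩)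

lemma no12a (h : ¬ containsPat P pat12a) {i1 i2 : Fin J} {l1 l2 : Fin L}
    (hi : i1 ≠ i2) (hl : l1 ≠ l2) (h11 : 2 ≤ P i1 l1) (h21 : 1 ≤ P i2 l1)
    (h22 : 2 ≤ P i2 l2) : False :=
  h (Or.inr ⟨![i1, i2], ![l1, l2], inj2' hi, inj2' hl, by
    intro a b; fin_cases a <;> fin_cases b <;> simp [pat12a] <;> assumption⟩)

lemma no12b (h : ¬ containsPat P pat12b) {i1 i2 : Fin J} {l1 l2 l3 : Fin L}
    (hi : i1 ≠ i2) (h12 : l1 ≠ l2) (h13 : l1 ≠ l3) (h23 : l2 ≠ l3)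
    (a1 : 2 ≤ P i1 l1) (a2 : 1 ≤ P i1 l2) (a3 : 1 ≤ P i1 l3)
    (b2 : 1 ≤ P i2 l2) (b3 : 1 ≤ P i2 l3) : False :=
  h (Or.inl ⟨![i1, i2], ![l1, l2, l3], inj2' hi, inj3' h12 h13 h23, by
    intro a b; fin_cases a <;> fin_cases b <;> simp [pat12b] <;> assumption⟩)

end pats

end helperlemmas

theorem stmt_3 {J L : ℕ} (dc : ℕ) (hdc : 4 ≤ dc)
    (P : Matrix (Fin J) (Fin L) ℕ)
    (hreg : protoRegular P 3 dc)
    (havoid : avoidsLt14 P) :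
    numTwos P ≤ J - 2 := by
  
  classical
  obtain ⟨⟨⟨h6, h8⟩, h10⟩, h12a, h12b, -⟩ := havoid
  obtain ⟨hcol, hrow⟩ := hreg
  show (Finset.univ.filter (fun p : Fin J × Fin L => P p.1 p.2 = 2)).card ≤ J - 2

  have hle2 : ∀ i l, P i l ≤ 2 := no6 h6
  have hrowu : ∀ (i : Fin J) (l1 l2 : Fin L), 2 ≤ P i l1 → 2 ≤ P i l2 → l1 = l2 := by
    intro i l1 l2 a b; by_contra hne; exact no8row h8 hne a b
  have hcolu : ∀ (i1 i2 : Fin J) (l : Fin L), 2 ≤ P i1 l → 2 ≤ P i2 l → i1 = i2 := by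
    intro i1 i2 l a b; by_contra hne; exact no8col h8 hne a b
  -- trivial cases
  rcases Nat.lt_or_ge J 2 with hJ | hJ
  · interval_cases J
    · simp
    · exfalso
      rcases Nat.eq_zero_or_pos L with hL | hL
      · subst hL
        have := hrow 0
        simp at this
        omega
      · have := hcol ⟨0, hL⟩
        rw [Fin.sum_univ_one] at this
        have := hle2 0 ⟨0, hL⟩
        omega
  -- main case
  by_contra hcon
  push_neg at hcon
  set S : Finset (Fin J) := univ.filter (fun j => ∃ l, P j l = 2) with hSdef
  have hnum_le : (Finset.univ.filter (fun p : Fin J × Fin L => P p.1 p.2 = 2)).card ≤ S.card := by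
    apply Finset.card_le_card_of_injOn Prod.fst
    · intro p hp
      have hp2 : P p.1 p.2 = 2 := by simpa using hp
      rw [hSdef]
      exact mem_filter.mpr ⟨mem_univ _, ⟨p.2, hp2⟩⟩
    · intro p hp q hq hpq
      have hp2 : P p.1 p.2 = 2 := by simpa using hp
      have hq2 : P q.1 q.2 = 2 := by simpa using hq
      have : p.2 = q.2 := hrowu p.1 p.2 q.2 hp2.ge (by rw [hpq]; exact hq2.ge)
      exact Prod.ext hpq this
  have hScard_ge : J - 1 ≤ S.card := by omega
  -- L > 0
  have hL : 0 < L := by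
    rcases Nat.eq_zero_or_pos L with hL | hL
    · exfalso; have := hrow ⟨0, by omega⟩; subst hL; simp at this; omega
    · exact hL
  -- choose the 2-column of each row in S
  have hex : ∀ j : Fin J, ∃ l, j ∈ S → P j l = 2 := by
    intro j
    by_cases hj : j ∈ S
    · obtain ⟨l, hl⟩ := (mem_filter.mp hj).2
      exact ⟨l, fun _ => hl⟩
    · exact ⟨⟨0, hL⟩, fun h => absurd h hj⟩
  choose lcol hlcol using hex
  have hsum1 : ∀ j ∈ S, ∑ i ∈ univ.erase j, P i (lcol j) = 1 := by
    intro j hj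
    have h3 := hcol (lcol j)
    rw [← Finset.add_sum_erase _ _ (mem_univ j), hlcol j hj] at h3
    omega
  have hmemS : ∀ (i : Fin J) (m : Fin L), P i m = 2 → i ∈ S :=
    fun i m h => mem_filter.mpr ⟨mem_univ i, ⟨m, h⟩⟩
  have hpartner_notS : ∀ j ∈ S, ∀ i, i ≠ j → P i (lcol j) ≠ 0 → i ∉ S := by
    intro j hj i hij hiz hiS
    have h2i : P i (lcol i) = 2 := hlcol i hiS
    have hne : lcol j ≠ lcol i := by
      intro he
      have : 2 ≤ P i (lcol j) := by rw [he, h2i]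
      exact hij (hcolu i j (lcol j) this (by rw [hlcol j hj]))
    exact no12a h12a (Ne.symm hij) hne (by rw [hlcol j hj]) (by omega) (by rw [h2i])
  -- existence of a row outside S
  have hSne : S.Nonempty := by
    apply Finset.card_pos.mp; omega
  obtain ⟨j₁, hj₁⟩ := hSne
  obtain ⟨i₀, hi₀mem, hi₀ne⟩ :=
    Finset.exists_ne_zero_of_sum_ne_zero (by rw [hsum1 j₁ hj₁]; norm_num :
      ∑ i ∈ univ.erase j₁, P i (lcol j₁) ≠ 0)
  set j0 := i₀ with hj0def
  have hj0S : j0 ∉ S := hpartner_notS j₁ hj₁ j0 (Finset.ne_of_mem_erase hi₀mem) hi₀ne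
  have hScard : S.card = J - 1 := by
    have h1 : S.card < J := by
      have : S ⊂ univ := Finset.ssubset_univ_iff.mpr (fun h => hj0S (h ▸ mem_univ j0))
      simpa using Finset.card_lt_card this
    omega
  have huniq : ∀ i, i ∉ S → i = j0 := by
    intro i hi
    have hc : (univ \ S).card = 1 := by
      rw [Finset.card_sdiff_of_subset (subset_univ S)]
      simp [hScard]; omega
    exact Finset.card_le_one.mp hc.le i (Finset.mem_sdiff.mpr ⟨mem_univ i, hi⟩)
      j0 (Finset.mem_sdiff.mpr ⟨mem_univ j0, hj0S⟩)
  have hpart : ∀ j ∈ S, ∀ i, i ≠ j → P i (lcol j) ≠ 0 → i = j0 := by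
    intro j hj i hij hiz
    exact huniq i (hpartner_notS j hj i hij hiz)
  have hj0l : ∀ j ∈ S, P j0 (lcol j) = 1 := by
    intro j hj
    obtain ⟨i, hi, hine⟩ := Finset.exists_ne_zero_of_sum_ne_zero
      (by rw [hsum1 j hj]; norm_num : ∑ i ∈ univ.erase j, P i (lcol j) ≠ 0)
    have hij0 : i = j0 := hpart j hj i (Finset.ne_of_mem_erase hi) hine
    have hle : P i (lcol j) ≤ 1 := by
      rw [← hsum1 j hj]
      exact Finset.single_le_sum (f := fun i => P i (lcol j)) (fun _ _ => Nat.zero_le _) hi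
    rw [← hij0]; omega
  have hzero : ∀ j ∈ S, ∀ i, i ≠ j → i ≠ j0 → P i (lcol j) = 0 := by
    intro j hj i hij hij0
    by_contra hne
    exact hij0 (hpart j hj i hij hne)
  -- dc ≥ J - 1
  have hlinj : Set.InjOn lcol S := by
    intro a ha b hb hab
    exact hcolu a b (lcol a) (by rw [hlcol a ha]) (by rw [hab, hlcol b hb])
  have hdcJ : J - 1 ≤ dc := by
    have hcardT : (S.image lcol).card = S.card := Finset.card_image_of_injOn hlinj
    have h1 : (S.image lcol).card • 1 ≤ ∑ l ∈ S.image lcol, P j0 l := by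
      apply Finset.card_nsmul_le_sum
      intro l hl
      obtain ⟨j, hj, rfl⟩ := Finset.mem_image.mp hl
      rw [hj0l j hj]
    have h2 : ∑ l ∈ S.image lcol, P j0 l ≤ ∑ l, P j0 l :=
      Finset.sum_le_sum_of_subset (subset_univ _)
    rw [hrow j0] at h2
    simp at h1
    omega
  -- fix a row j in S
  obtain ⟨j, hjS⟩ : S.Nonempty := Finset.card_pos.mp (by omega)
  have hjj0 : j ≠ j0 := fun h => hj0S (h ▸ hjS)
  set l := lcol j with hldef
  have hl2 : P j l = 2 := hlcol j hjS
  have hj0l' : P j0 l = 1 := by rw [hldef]; exact hj0l j hjS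
  set O : Finset (Fin L) := (univ.erase l).filter (fun m => P j m ≠ 0) with hOdef
  have hO1 : ∀ m ∈ O, P j m = 1 := by
    intro m hm
    simp only [hOdef, mem_filter, mem_erase] at hm
    have : ¬ (2 ≤ P j m) := fun h => hm.1.1 (hrowu j m l h (by rw [hl2]))
    omega
  have hOl : ∀ m ∈ O, m ≠ l := by
    intro m hm; simp only [hOdef, mem_filter, mem_erase] at hm; exact hm.1.1
  have hOcard : dc ≤ 2 + O.card := by
    have hd := hrow j
    rw [← Finset.add_sum_erase _ _ (mem_univ l), hl2] at hd
    have he : ∑ m ∈ univ.erase l, P j m = ∑ m ∈ O, P j m :=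
      (Finset.sum_filter_ne_zero _).symm
    have hle : ∑ m ∈ O, P j m ≤ ∑ m ∈ O, 1 :=
      Finset.sum_le_sum (fun m hm => (hO1 m hm).le)
    simp only [Finset.sum_const, smul_eq_mul, mul_one] at hle
    omega
  have hj0O : ∀ m ∈ O, P j0 m = 0 := by
    intro m hm
    by_contra hne
    exact no10 h10 hjj0 (Ne.symm (hOl m hm)) (by rw [hl2]) (by have := hO1 m hm; omega)
      (by omega) (by omega)
  set A : Fin L → Finset (Fin J) := fun m => (univ.erase j).filter (fun i => P i m ≠ 0) with hAdef
  have hA2 : ∀ m ∈ O, 2 ≤ (A m).card := by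
    intro m hm
    have h3 := hcol m
    rw [← Finset.add_sum_erase _ _ (mem_univ j), hO1 m hm] at h3
    have hsum : ∑ i ∈ univ.erase j, P i m = 2 := by omega
    have hle1 : ∀ i ∈ univ.erase j, P i m ≤ 1 := by
      intro i hi
      by_contra hgt
      have h2 : P i m = 2 := by have := hle2 i m; omega
      have hiS : i ∈ S := hmemS i m h2
      have hlm : lcol i = m := hrowu i (lcol i) m (by rw [hlcol i hiS]) (by omega)
      have h1 : P j0 m = 1 := by rw [← hlm]; exact hj0l i hiS
      exact absurd (hj0O m hm) (by omega)
    have heq : ∑ i ∈ univ.erase j, P i m = ∑ i ∈ A m, P i m :=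
      (Finset.sum_filter_ne_zero _).symm
    have : ∑ i ∈ A m, P i m ≤ ∑ i ∈ A m, 1 := by
      apply Finset.sum_le_sum
      intro i hi
      simp only [hAdef, mem_filter] at hi
      exact hle1 i hi.1
    simp only [Finset.sum_const, smul_eq_mul, mul_one] at this
    omega
  have hAdisj : ∀ m1 ∈ O, ∀ m2 ∈ O, m1 ≠ m2 → Disjoint (A m1) (A m2) := by
    intro m1 hm1 m2 hm2 hne
    rw [Finset.disjoint_left]
    intro i hi1 hi2
    simp only [hAdef, mem_filter, mem_erase] at hi1 hi2
    exact no12b h12b (Ne.symm hi1.1.1) (Ne.symm (hOl m1 hm1)) (Ne.symm (hOl m2 hm2)) hne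
      (by rw [hl2]) (by have := hO1 m1 hm1; omega) (by have := hO1 m2 hm2; omega)
      (by omega) (by omega)
  have hsub : O.biUnion A ⊆ (univ.erase j).erase j0 := by
    intro i hi
    obtain ⟨m, hm, him⟩ := Finset.mem_biUnion.mp hi
    simp only [hAdef, mem_filter, mem_erase] at him
    refine Finset.mem_erase.mpr ⟨fun h => ?_, Finset.mem_erase.mpr ⟨him.1.1, mem_univ i⟩⟩
    rw [h] at him
    exact him.2 (hj0O m hm)
  have hcard2 : ((univ.erase j).erase j0).card = J - 2 := by
    rw [Finset.card_erase_of_mem (Finset.mem_erase.mpr ⟨Ne.symm hjj0, mem_univ j0⟩),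
      Finset.card_erase_of_mem (mem_univ j)]
    simp only [Finset.card_univ, Fintype.card_fin]
    omega
  have hkey : 2 * O.card ≤ J - 2 := by
    have h1 : O.card • 2 ≤ ∑ m ∈ O, (A m).card := Finset.card_nsmul_le_sum _ _ _ hA2
    have h2 : ∑ m ∈ O, (A m).card = (O.biUnion A).card := (Finset.card_biUnion hAdisj).symm
    have h3 : (O.biUnion A).card ≤ J - 2 := hcard2 ▸ Finset.card_le_card hsub
    simp only [smul_eq_mul] at h1
    omega
  omega
end

section
/- For every natural number J with J ≡ 2 (mod 6) and J ≥ 14, there exist a finite set V with |V| = J−2 and a family B of pairwise distinct 3-element subsets of V such that: (i) 6·|B| = (J−2)·(J−6); (ii) every point of V lies in exactly (J−6)/2 members of B; and (iii) every pair of distinct points of V is contained in at most one member of B. -/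
open Finset

set_option linter.unusedSectionVars false

namespace S7

variable (q : ℕ) [NeZero q]

abbrev K := ZMod q × ZMod 3

def hf : ZMod q := ((q+1)/2 : ℕ)

def col (x : ZMod q) : Finset (K q) := {(x,0),(x,1),(x,2)}

def tri (x y : ZMod q) (i : ZMod 3) : Finset (K q) :=
  {(x,i),(y,i),(hf q * (x+y), i+1)}

def Triples : Finset (Finset (K q)) :=
  (univ.image (col q)) ∪
    (((univ : Finset (ZMod q × ZMod q × ZMod 3)).filter
      (fun t => t.1 ≠ t.2.1)).image (fun t => tri q t.1 t.2.1 t.2.2))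

variable {q}

lemma two_hf (hq : q % 2 = 1) : (2 : ZMod q) * hf q = 1 := by
  have h : 2 * ((q+1)/2) = q + 1 := by omega
  have : ((2 * ((q+1)/2) : ℕ) : ZMod q) = ((q + 1 : ℕ) : ZMod q) := by rw [h]
  push_cast at this
  simpa [hf, ZMod.natCast_self] using this

lemma hf_two_mul (hq : q % 2 = 1) (a : ZMod q) : hf q * (2 * a) = a := by
  rw [mul_comm (hf q), mul_assoc, mul_comm a, ← mul_assoc, two_hf hq, one_mul]

lemma two_cancel (hq : q % 2 = 1) {a b : ZMod q} (h : 2 * a = 2 * b) : a = b := by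
  rw [← hf_two_mul hq a, h, hf_two_mul hq]

lemma hf_eq_iff (hq : q % 2 = 1) {a b : ZMod q} : hf q * a = b ↔ a = 2 * b := by
  constructor
  · rintro rfl
    conv_lhs => rw [← one_mul a, ← two_hf hq]
    exact mul_assoc _ _ _
  · rintro rfl
    exact hf_two_mul hq b

lemma mem_Triples {b : Finset (K q)} :
    b ∈ Triples q ↔ (∃ x, b = col q x) ∨ ∃ x y i, x ≠ y ∧ b = tri q x y i := by
  simp only [Triples, mem_union, mem_image, mem_filter, mem_univ, true_and]
  constructor
  · rintro (⟨x, _, rfl⟩ | ⟨⟨x,y,i⟩, hxy, rfl⟩)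
    · exact Or.inl ⟨x, rfl⟩
    · exact Or.inr ⟨x, y, i, hxy, rfl⟩
  · rintro (⟨x, rfl⟩ | ⟨x, y, i, hxy, rfl⟩)
    · exact Or.inl ⟨x, rfl⟩
    · exact Or.inr ⟨⟨x,y,i⟩, hxy, rfl⟩

lemma mem_col {z : K q} {x : ZMod q} :
    z ∈ col q x ↔ z = (x,0) ∨ z = (x,1) ∨ z = (x,2) := by
  simp [col]

lemma mem_tri {z : K q} {x y : ZMod q} {i : ZMod 3} :
    z ∈ tri q x y i ↔ z = (x,i) ∨ z = (y,i) ∨ z = (hf q * (x+y), i+1) := by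
  simp [tri]

lemma col_mem_Triples (x : ZMod q) : col q x ∈ Triples q :=
  mem_Triples.mpr (Or.inl ⟨x, rfl⟩)

lemma tri_mem_Triples {x y : ZMod q} (hxy : x ≠ y) (i : ZMod 3) :
    tri q x y i ∈ Triples q :=
  mem_Triples.mpr (Or.inr ⟨x, y, i, hxy, rfl⟩)

lemma tri_comm (x y : ZMod q) (i : ZMod 3) : tri q x y i = tri q y x i := by
  ext z
  rw [mem_tri, mem_tri, add_comm y x]
  tauto

lemma card_col (x : ZMod q) : (col q x).card = 3 := by
  rw [Finset.card_eq_three]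
  refine ⟨(x,0),(x,1),(x,2), ?_, ?_, ?_, rfl⟩ <;> simp <;> decide

lemma card_tri {x y : ZMod q} (hxy : x ≠ y) (i : ZMod 3) : (tri q x y i).card = 3 := by
  have hne : i ≠ i + 1 := (by decide : ∀ j : ZMod 3, j ≠ j + 1) i
  have h01 : ((x,i) : K q) ≠ (y,i) := by simp [Prod.ext_iff, hxy]
  have h02 : ((x,i) : K q) ≠ (hf q * (x+y), i+1) := fun h => hne (congrArg Prod.snd h)
  have h12 : ((y,i) : K q) ≠ (hf q * (x+y), i+1) := fun h => hne (congrArg Prod.snd h)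
  rw [Finset.card_eq_three]
  exact ⟨(x,i),(y,i),(hf q * (x+y), i+1), h01, h02, h12, rfl⟩

lemma card_of_mem_Triples {b : Finset (K q)} (hb : b ∈ Triples q) : b.card = 3 := by
  rcases mem_Triples.mp hb with ⟨x, rfl⟩ | ⟨x, y, i, hxy, rfl⟩
  · exact card_col x
  · exact card_tri hxy i

/-- The canonical block through two distinct points. -/
def blk (p r : K q) : Finset (K q) :=
  if p.1 = r.1 then col q p.1
  else if p.2 = r.2 then tri q p.1 r.1 p.2
  else if r.2 = p.2 + 1 then tri q p.1 (2 * r.1 - p.1) p.2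
  else tri q r.1 (2 * p.1 - r.1) r.2

end S7

namespace S7
open Finset
variable {q : ℕ} [NeZero q]

lemma z3_cases : ∀ i j : ZMod 3, i = j ∨ j = i + 1 ∨ i = j + 1 := by decide
lemma z3_ne_add_one : ∀ i : ZMod 3, i ≠ i + 1 := by decide
lemma z3_ne_add_two : ∀ i : ZMod 3, i ≠ i + 1 + 1 := by decide
lemma z3_012 : ∀ i : ZMod 3, i = 0 ∨ i = 1 ∨ i = 2 := by decide

lemma blk_eq_col {x y : ZMod q} {i j : ZMod 3} (h : x = y) :
    blk ((x,i) : K q) (y,j) = col q x := by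
  simp [blk, h]

lemma blk_eq_same {x y : ZMod q} {i j : ZMod 3} (h : x ≠ y) (h2 : i = j) :
    blk ((x,i) : K q) (y,j) = tri q x y i := by
  simp [blk, h, h2]

lemma blk_eq_up {x y : ZMod q} {i j : ZMod 3} (h : x ≠ y) (h3 : j = i + 1) :
    blk ((x,i) : K q) (y,j) = tri q x (2*y - x) i := by
  have h2 : ¬ i = j := fun hij => z3_ne_add_one j (by rw [hij] at h3; exact h3)
  simp [blk, h, h2, h3]

lemma blk_eq_down {x y : ZMod q} {i j : ZMod 3} (h : x ≠ y) (h2 : i ≠ j) (h3 : j ≠ i + 1) :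
    blk ((x,i) : K q) (y,j) = tri q y (2*x - y) j := by
  simp [blk, h, h2, h3]

end S7

namespace S7
open Finset
variable {q : ℕ} [NeZero q]

lemma two_mul_hf (hq : q % 2 = 1) (a : ZMod q) : 2 * (hf q * a) = a := by
  rw [← mul_assoc, two_hf hq, one_mul]

lemma blk_spec (hq : q % 2 = 1) {p r : K q} (hpr : p ≠ r) :
    blk p r ∈ Triples q ∧ p ∈ blk p r ∧ r ∈ blk p r := by
  obtain ⟨x, i⟩ := p
  obtain ⟨y, j⟩ := r
  by_cases h1 : x = y
  · subst h1
    rw [blk_eq_col rfl]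
    refine ⟨col_mem_Triples x, ?_, ?_⟩
    · rw [mem_col]; rcases z3_012 i with h|h|h <;> simp [h]
    · rw [mem_col]; rcases z3_012 j with h|h|h <;> simp [h]
  · rcases z3_cases i j with h2 | h3 | h4
    · subst h2
      rw [blk_eq_same h1 rfl]
      exact ⟨tri_mem_Triples h1 i, by rw [mem_tri]; tauto, by rw [mem_tri]; tauto⟩
    · rw [blk_eq_up h1 h3]
      have hw : x ≠ 2 * y - x := fun h => h1 (two_cancel hq (by linear_combination h))
      have key : hf q * (x + (2 * y - x)) = y := by
        rw [show x + (2 * y - x) = 2 * y by ring, hf_two_mul hq]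
      refine ⟨tri_mem_Triples hw i, by rw [mem_tri]; tauto, ?_⟩
      rw [mem_tri, key, ← h3]
      tauto
    · have h2 : i ≠ j := fun h => z3_ne_add_one j (h ▸ h4)
      have h3 : j ≠ i + 1 := fun h => z3_ne_add_two i (by rw [h] at h4; exact h4)
      rw [blk_eq_down h1 h2 h3]
      have hw : y ≠ 2 * x - y := fun h => h1 (two_cancel hq (by linear_combination h)).symm
      have key : hf q * (y + (2 * x - y)) = x := by
        rw [show y + (2 * x - y) = 2 * x by ring, hf_two_mul hq]
      refine ⟨tri_mem_Triples hw j, ?_, by rw [mem_tri]; tauto⟩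
      rw [mem_tri, key, ← h4]
      tauto

lemma eq_blk (hq : q % 2 = 1) {p r : K q} (hpr : p ≠ r) {b : Finset (K q)}
    (hb : b ∈ Triples q) (hp : p ∈ b) (hr : r ∈ b) : b = blk p r := by
  obtain ⟨x, i⟩ := p
  obtain ⟨y, j⟩ := r
  rcases mem_Triples.mp hb with ⟨z, rfl⟩ | ⟨a, c, l, hac, rfl⟩
  · rw [mem_col] at hp hr
    have hx : x = z := by rcases hp with h|h|h <;> exact congrArg Prod.fst h
    have hy : y = z := by rcases hr with h|h|h <;> exact congrArg Prod.fst h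
    rw [blk_eq_col (hx.trans hy.symm), hx]
  · have has : hf q * (a + c) ≠ a := by
      intro h
      exact hac (by linear_combination -((hf_eq_iff hq).mp h))
    have hcs : hf q * (a + c) ≠ c := by
      intro h
      exact hac (by linear_combination (hf_eq_iff hq).mp h)
    have hkey : 2 * (hf q * (a + c)) = a + c := two_mul_hf hq _
    have hll : (l : ZMod 3) ≠ l + 1 := z3_ne_add_one l
    rw [mem_tri] at hp hr
    rcases hp with hp|hp|hp <;> rcases hr with hr|hr|hr
    · exact absurd (hp.trans hr.symm) hpr
    · rw [hp, hr]
      rw [blk_eq_same hac rfl]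
    · rw [hp, hr]
      rw [blk_eq_up has.symm rfl, hkey, show a + c - a = c by ring]
    · rw [hp, hr]
      rw [blk_eq_same (Ne.symm hac) rfl]
      exact tri_comm a c l
    · exact absurd (hp.trans hr.symm) hpr
    · rw [hp, hr]
      rw [blk_eq_up hcs.symm rfl, hkey, show a + c - c = a by ring]
      exact tri_comm a c l
    · rw [hp, hr]
      rw [blk_eq_down has (Ne.symm hll) (fun h => z3_ne_add_two l h), hkey,
        show a + c - a = c by ring]
    · rw [hp, hr]
      rw [blk_eq_down hcs (Ne.symm hll) (fun h => z3_ne_add_two l h), hkey,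
        show a + c - c = a by ring]
      exact tri_comm a c l
    · exact absurd (hp.trans hr.symm) hpr

end S7

namespace S7
open Finset
variable {q : ℕ} [NeZero q]

lemma pair_filter_eq (hq : q % 2 = 1) {p r : K q} (hpr : p ≠ r) :
    ((Triples q).filter (fun b => p ∈ b ∧ r ∈ b)) = {blk p r} := by
  ext b
  simp only [mem_filter, mem_singleton]
  constructor
  · rintro ⟨hb, hp, hr⟩; exact eq_blk hq hpr hb hp hr
  · rintro rfl
    obtain ⟨h1, h2, h3⟩ := blk_spec hq hpr
    exact ⟨h1, h2, h3⟩

lemma point_count (hq : q % 2 = 1) (p : K q) :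
    2 * ((Triples q).filter (fun b => p ∈ b)).card = 3 * q - 1 := by
  classical
  set T := (Triples q).filter (fun b => p ∈ b) with hT
  have hdisj : ∀ b1 ∈ T, ∀ b2 ∈ T, b1 ≠ b2 → Disjoint (b1.erase p) (b2.erase p) := by
    intro b1 h1 b2 h2 hne
    rw [Finset.disjoint_left]
    intro z hz1 hz2
    rw [hT, mem_filter] at h1 h2
    have hzp : p ≠ z := fun h => (Finset.mem_erase.mp hz1).1 h.symm
    have e1 := eq_blk hq hzp h1.1 h1.2 (Finset.mem_of_mem_erase hz1)
    have e2 := eq_blk hq hzp h2.1 h2.2 (Finset.mem_of_mem_erase hz2)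
    exact hne (e1.trans e2.symm)
  have hunion : T.biUnion (fun b => b.erase p) = univ.erase p := by
    ext z
    simp only [Finset.mem_biUnion, Finset.mem_erase, Finset.mem_univ, and_true]
    constructor
    · rintro ⟨b, _, hz, _⟩; exact hz
    · intro hz
      have hpz : p ≠ z := fun h => hz h.symm
      obtain ⟨h1, h2, h3⟩ := blk_spec hq hpz
      exact ⟨blk p z, mem_filter.mpr ⟨h1, h2⟩, hz, h3⟩
  have hcard := Finset.card_biUnion hdisj
  rw [hunion] at hcard
  have h1 : (Finset.univ.erase p).card = 3 * q - 1 := by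
    rw [Finset.card_erase_of_mem (mem_univ p), Finset.card_univ]
    have : Fintype.card (K q) = q * 3 := by
      rw [Fintype.card_prod, ZMod.card, ZMod.card]
    omega
  have h2 : ∑ b ∈ T, (b.erase p).card = 2 * T.card := by
    rw [Finset.sum_congr rfl (fun b hb => ?_), Finset.sum_const, smul_eq_mul, mul_comm]
    rw [hT, mem_filter] at hb
    rw [Finset.card_erase_of_mem hb.2, card_of_mem_Triples hb.1]
  omega

lemma two_zero_col (hq : q % 2 = 1) {b : Finset (K q)} (hb : b ∈ Triples q)
    {i j : ZMod 3} (hij : i ≠ j) (hi : ((0:ZMod q),i) ∈ b) (hj : ((0:ZMod q),j) ∈ b) :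
    b = col q 0 := by
  have hne : ((0:ZMod q),i) ≠ ((0:ZMod q),j) := fun h => hij (congrArg Prod.snd h)
  rw [eq_blk hq hne hb hi hj, blk_eq_col rfl]

lemma bad_count (hq : q % 2 = 1) {p : K q} (hp : p.1 ≠ 0) :
    ((Triples q).filter (fun b => p ∈ b ∧ ¬ ∀ z ∈ b, z.1 ≠ 0)).card = 3 := by
  have himg : (Triples q).filter (fun b => p ∈ b ∧ ¬ ∀ z ∈ b, z.1 ≠ 0)
      = (univ : Finset (ZMod 3)).image (fun i => blk p ((0:ZMod q), i)) := by
    ext b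
    simp only [mem_filter, mem_image, mem_univ, true_and]
    constructor
    · rintro ⟨hb, hpb, hbad⟩
      push_neg at hbad
      obtain ⟨z, hz, hz0⟩ := hbad
      refine ⟨z.2, ?_⟩
      have hzeq : ((0:ZMod q), z.2) = z := (Prod.ext_iff.mpr ⟨hz0.symm, rfl⟩)
      have hpz : p ≠ z := fun h => hp (by rw [h, hz0])
      rw [hzeq]
      exact (eq_blk hq hpz hb hpb hz).symm
    · rintro ⟨i, rfl⟩
      have hpz : p ≠ ((0:ZMod q), i) := fun h => hp (congrArg Prod.fst h)
      obtain ⟨h1, h2, h3⟩ := blk_spec hq hpz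
      refine ⟨h1, h2, ?_⟩
      push_neg
      exact ⟨((0:ZMod q),i), h3, rfl⟩
  have hinj : Set.InjOn (fun i : ZMod 3 => blk p ((0:ZMod q), i)) (univ : Finset (ZMod 3)) := by
    intro i _ j _ hij
    have hij' : blk p ((0:ZMod q),i) = blk p ((0:ZMod q),j) := hij
    by_contra hne
    have h1 := blk_spec hq (show p ≠ ((0:ZMod q),i) from fun h => hp (congrArg Prod.fst h))
    have h2 := blk_spec hq (show p ≠ ((0:ZMod q),j) from fun h => hp (congrArg Prod.fst h))
    have hcol : blk p ((0:ZMod q),i) = col q 0 :=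
      two_zero_col hq h1.1 hne h1.2.2 (hij' ▸ h2.2.2)
    have : p ∈ col q 0 := hcol ▸ h1.2.1
    rw [mem_col] at this
    rcases this with h|h|h <;> exact hp (congrArg Prod.fst h)
  rw [himg, Finset.card_image_of_injOn hinj, Finset.card_univ, ZMod.card]

def Bgood (q : ℕ) [NeZero q] : Finset (Finset (K q)) :=
  (Triples q).filter (fun b => ∀ z ∈ b, z.1 ≠ 0)

lemma good_count (hq : q % 2 = 1) {p : K q} (hp : p.1 ≠ 0) :
    2 * ((Bgood q).filter (fun b => p ∈ b)).card = 3 * q - 7 := by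
  classical
  have hsplit := Finset.card_filter_add_card_filter_not
    (s := (Triples q).filter (fun b => p ∈ b)) (p := fun b => ∀ z ∈ b, z.1 ≠ 0)
  rw [Finset.filter_filter, Finset.filter_filter] at hsplit
  have e1 : ((Triples q).filter (fun b => p ∈ b ∧ ∀ z ∈ b, z.1 ≠ 0)).card
      = ((Bgood q).filter (fun b => p ∈ b)).card := by
    rw [Bgood, Finset.filter_filter]
    congr 1
    apply Finset.filter_congr
    intro b _
    tauto
  have e2 := bad_count hq hp
  have e3 := point_count hq p
  rw [e1, e2] at hsplit
  omega

lemma zero_col_filter_card :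
    ((univ : Finset (K q)).filter (fun p => p.1 = 0)).card = 3 := by
  have : (univ : Finset (K q)).filter (fun p => p.1 = 0) = col q 0 := by
    ext z
    simp only [mem_filter, mem_univ, true_and, mem_col]
    constructor
    · intro h
      have hz : z = (z.1, z.2) := rfl
      rcases z3_012 z.2 with h2|h2|h2 <;>
        [exact Or.inl (by rw [hz, h, h2]);
         exact Or.inr (Or.inl (by rw [hz, h, h2]));
         exact Or.inr (Or.inr (by rw [hz, h, h2]))]
    · rintro (h|h|h) <;> exact congrArg Prod.fst h
  rw [this, card_col]

lemma nonzero_filter_card :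
    ((univ : Finset (K q)).filter (fun p => p.1 ≠ 0)).card = 3 * q - 3 := by
  have hsplit := Finset.card_filter_add_card_filter_not
    (s := (univ : Finset (K q))) (p := fun p => p.1 = 0)
  have h0 := zero_col_filter_card (q := q)
  have hcu : (univ : Finset (K q)).card = 3 * q := by
    rw [Finset.card_univ, Fintype.card_prod, ZMod.card, ZMod.card]; ring
  have : ((univ : Finset (K q)).filter (fun p => ¬ p.1 = 0)).card = 3 * q - 3 := by omega
  simpa using this

lemma Bgood_card (hq : q % 2 = 1) : 6 * (Bgood q).card = (3*q - 3) * (3*q - 7) := by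
  classical
  have h1 : ∑ b ∈ Bgood q, b.card = 3 * (Bgood q).card := by
    have hmem : ∀ b ∈ Bgood q, b.card = 3 := fun b hb =>
      card_of_mem_Triples (Finset.mem_filter.mp hb).1
    rw [Finset.sum_congr rfl hmem, Finset.sum_const, smul_eq_mul, mul_comm]
  have h2 : ∑ b ∈ Bgood q, b.card
      = ∑ p : K q, ((Bgood q).filter (fun b => p ∈ b)).card := by
    have e1 : ∀ b ∈ Bgood q, b.card = ∑ p : K q, if p ∈ b then 1 else 0 := by
      intro b _
      rw [← Finset.card_filter]
      congr 1
      ext z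
      simp
    rw [Finset.sum_congr rfl e1, Finset.sum_comm]
    exact Finset.sum_congr rfl (fun p _ => (Finset.card_filter _ _).symm)
  have h3 : 2 * ∑ p : K q, ((Bgood q).filter (fun b => p ∈ b)).card
      = (3*q-3) * (3*q-7) := by
    rw [Finset.mul_sum,
      ← Finset.sum_filter_add_sum_filter_not univ (fun p : K q => p.1 ≠ 0)]
    have hz : ∀ p ∈ univ.filter (fun p : K q => ¬ p.1 ≠ 0),
        2 * ((Bgood q).filter (fun b => p ∈ b)).card = 0 := by
      intro p hp
      rw [mem_filter] at hp
      have hp0 : p.1 = 0 := by simpa using hp.2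
      have : (Bgood q).filter (fun b => p ∈ b) = ∅ := by
        rw [Finset.eq_empty_iff_forall_notMem]
        intro b hb
        rw [mem_filter, Bgood, mem_filter] at hb
        exact hb.1.2 p hb.2 hp0
      rw [this]
      simp
    rw [Finset.sum_congr rfl hz, Finset.sum_const, smul_eq_mul, mul_zero, add_zero]
    rw [Finset.sum_congr rfl (fun p hp => good_count hq (mem_filter.mp hp).2),
      Finset.sum_const, smul_eq_mul, nonzero_filter_card]
  omega

end S7

open S7

theorem stmt_7 (J : ℕ) (hmod : J % 6 = 2) (hJ : 14 ≤ J) :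
    ∃ (V : Type) (_ : Fintype V) (_ : DecidableEq V) (B : Finset (Finset V)),
      Fintype.card V = J - 2 ∧
      (∀ b ∈ B, b.card = 3) ∧
      6 * B.card = (J - 2) * (J - 6) ∧
      (∀ p : V, 2 * (B.filter (fun b => p ∈ b)).card = J - 6) ∧
      (∀ x y : V, x ≠ y → (B.filter (fun b => x ∈ b ∧ y ∈ b)).card ≤ 1) := by
  classical
  obtain ⟨q, h3q, hq2⟩ : ∃ q, 3 * q = J + 1 ∧ q % 2 = 1 := ⟨(J+1)/3, by omega, by omega⟩
  haveI : NeZero q := ⟨by omega⟩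
  refine ⟨{p : K q // p.1 ≠ 0}, inferInstance, inferInstance,
    (Bgood q).image (fun b => b.subtype (fun p => p.1 ≠ 0)), ?_, ?_, ?_, ?_, ?_⟩
  · rw [Fintype.card_subtype, nonzero_filter_card]
    omega
  · intro b hb
    rw [Finset.mem_image] at hb
    obtain ⟨b0, hb0, rfl⟩ := hb
    rw [Finset.card_subtype, Finset.filter_eq_self.mpr (mem_filter.mp hb0).2,
      card_of_mem_Triples (mem_filter.mp hb0).1]
  · have hinj : Set.InjOn (fun b : Finset (K q) => b.subtype (fun p => p.1 ≠ 0)) (Bgood q) := by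
      intro b1 h1 b2 h2 he
      have he' : b1.subtype (fun p : K q => p.1 ≠ 0) = b2.subtype (fun p => p.1 ≠ 0) := he
      calc b1 = b1.filter (fun p : K q => p.1 ≠ 0) :=
            (Finset.filter_eq_self.mpr (Finset.mem_filter.mp h1).2).symm
        _ = (b1.subtype (fun p : K q => p.1 ≠ 0)).map (Function.Embedding.subtype _) :=
            (Finset.subtype_map _).symm
        _ = (b2.subtype (fun p : K q => p.1 ≠ 0)).map (Function.Embedding.subtype _) := by
            rw [he']
        _ = b2.filter (fun p : K q => p.1 ≠ 0) := Finset.subtype_map _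
        _ = b2 := Finset.filter_eq_self.mpr (Finset.mem_filter.mp h2).2
    rw [Finset.card_image_of_injOn hinj]
    have := Bgood_card (q := q) hq2
    have e1 : 3 * q - 3 = J - 2 := by omega
    have e2 : 3 * q - 7 = J - 6 := by omega
    rw [← e1, ← e2]
    exact this
  · intro p
    rw [Finset.filter_image]
    have hres : ((Bgood q).filter
          (fun b => p ∈ b.subtype (fun z : K q => z.1 ≠ 0))) =
        (Bgood q).filter (fun b => (p : K q) ∈ b) := by
      apply Finset.filter_congr
      intro b _
      simp [Finset.mem_subtype]
    rw [hres]
    have hinj2 : Set.InjOn (fun b : Finset (K q) => b.subtype (fun p => p.1 ≠ 0))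
        ((Bgood q).filter (fun b => (p : K q) ∈ b)) := by
      intro b1 h1 b2 h2 he
      have he' : b1.subtype (fun p : K q => p.1 ≠ 0) = b2.subtype (fun p => p.1 ≠ 0) := he
      have h1' := (Finset.mem_filter.mp (Finset.mem_filter.mp h1).1).2
      have h2' := (Finset.mem_filter.mp (Finset.mem_filter.mp h2).1).2
      calc b1 = b1.filter (fun p : K q => p.1 ≠ 0) := (Finset.filter_eq_self.mpr h1').symm
        _ = (b1.subtype (fun p : K q => p.1 ≠ 0)).map (Function.Embedding.subtype _) :=
            (Finset.subtype_map _).symm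
        _ = (b2.subtype (fun p : K q => p.1 ≠ 0)).map (Function.Embedding.subtype _) := by
            rw [he']
        _ = b2.filter (fun p : K q => p.1 ≠ 0) := Finset.subtype_map _
        _ = b2 := Finset.filter_eq_self.mpr h2'
    rw [Finset.card_image_of_injOn hinj2, good_count hq2 p.prop]
    omega
  · intro x y hxy
    rw [Finset.filter_image]
    have hxy' : (x : K q) ≠ (y : K q) := fun h => hxy (Subtype.coe_injective h)
    calc (((Bgood q).filter (fun b =>
            x ∈ b.subtype (fun z : K q => z.1 ≠ 0) ∧
            y ∈ b.subtype (fun z : K q => z.1 ≠ 0))).image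
          (fun b => b.subtype (fun p : K q => p.1 ≠ 0))).card
        ≤ ((Bgood q).filter (fun b =>
            x ∈ b.subtype (fun z : K q => z.1 ≠ 0) ∧
            y ∈ b.subtype (fun z : K q => z.1 ≠ 0))).card := Finset.card_image_le
      _ ≤ ((Triples q).filter (fun b => (x : K q) ∈ b ∧ (y : K q) ∈ b)).card := by
          apply Finset.card_le_card
          intro b hb
          rw [Finset.mem_filter] at hb ⊢
          rw [Finset.mem_subtype, Finset.mem_subtype] at hb
          exact ⟨(Finset.mem_filter.mp hb.1).1, hb.2⟩
      _ = 1 := by rw [pair_filter_eq hq2 hxy', Finset.card_singleton]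
end

section
/- Let V be a finite set with |V| = v and let B be a family of subsets of V such that exactly one member B5 of B has size 5, every other member of B has size 3, and every 2-element subset of V is contained in exactly one member of B. Fix a point p ∈ B5 and define B' = {B5} ∪ {b ∈ B : p ∉ b}. Then: (i) every point q ∈ V with q ≠ p lies in exactly (v−3)/2 members of B'; and (ii) 6·|B'| = v² − 4v + 1. -/
open Finset

theorem stmt_9 {V : Type*} [Fintype V] [DecidableEq V] (v : ℕ)
    (hv : Fintype.card V = v)
    (B : Finset (Finset V)) (B5 : Finset V)
    (hB5 : B5 ∈ B) (hB5card : B5.card = 5)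
    (hrest : ∀ b ∈ B, b ≠ B5 → b.card = 3)
    (hsteiner : ∀ x y : V, x ≠ y → ∃! b : Finset V, b ∈ B ∧ x ∈ b ∧ y ∈ b)
    (p : V) (hp : p ∈ B5)
    (B' : Finset (Finset V))
    (hB' : B' = insert B5 (B.filter (fun b => p ∉ b))) :
    (∀ q : V, q ≠ p → 2 * (B'.filter (fun b => q ∈ b)).card = v - 3) ∧
    6 * B'.card = v ^ 2 - 4 * v + 1 := by
  have huniq : ∀ x y : V, x ≠ y → ∀ b1 b2, b1 ∈ B → b2 ∈ B →
      x ∈ b1 → y ∈ b1 → x ∈ b2 → y ∈ b2 → b1 = b2 := by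
    intro x y hxy b1 b2 h1 h2 hx1 hy1 hx2 hy2
    obtain ⟨b, _, hu⟩ := hsteiner x y hxy
    rw [hu b1 ⟨h1, hx1, hy1⟩, hu b2 ⟨h2, hx2, hy2⟩]
  have hv5 : 5 ≤ v := by rw [← hv, ← hB5card]; exact card_le_univ B5
  -- degree-sum lemma
  have hdegsum : ∀ q : V,
      ∑ b ∈ B.filter (fun b => q ∈ b), (b.erase q).card = v - 1 := by
    intro q
    have hdisj : ∀ b1 ∈ B.filter (fun b => q ∈ b), ∀ b2 ∈ B.filter (fun b => q ∈ b),
        b1 ≠ b2 → Disjoint (b1.erase q) (b2.erase q) := by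
      intro b1 h1 b2 h2 hne
      simp only [mem_filter] at h1 h2
      rw [Finset.disjoint_left]
      intro x hx1 hx2
      rw [mem_erase] at hx1 hx2
      exact hne (huniq q x (Ne.symm hx1.1) b1 b2 h1.1 h2.1 h1.2 hx1.2 h2.2 hx2.2)
    rw [← Finset.card_biUnion hdisj]
    have hU : (B.filter (fun b => q ∈ b)).biUnion (fun b => b.erase q) = univ.erase q := by
      ext x
      simp only [mem_biUnion, mem_filter, mem_erase, mem_univ, and_true]
      constructor
      · rintro ⟨b, ⟨_, _⟩, hxq, _⟩; exact hxq
      · intro hxq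
        obtain ⟨b, ⟨hb, hqb, hxb⟩, -⟩ := hsteiner q x (Ne.symm hxq)
        exact ⟨b, ⟨hb, hqb⟩, hxq, hxb⟩
    rw [hU, card_erase_of_mem (mem_univ q), card_univ, hv]
  -- part (i)
  have part1 : ∀ q : V, q ≠ p → 2 * (B'.filter (fun b => q ∈ b)).card = v - 3 := by
    intro q hq
    by_cases hqB5 : q ∈ B5
    · set T := B.filter (fun b => q ∈ b ∧ b ≠ B5) with hT
      have hsplit : B.filter (fun b => q ∈ b) = insert B5 T := by
        ext b; simp only [hT, mem_filter, mem_insert]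
        constructor
        · rintro ⟨hb, hqb⟩
          by_cases h : b = B5
          · exact Or.inl h
          · exact Or.inr ⟨hb, hqb, h⟩
        · rintro (rfl | ⟨hb, hqb, _⟩)
          · exact ⟨hB5, hqB5⟩
          · exact ⟨hb, hqb⟩
      have hB5T : B5 ∉ T := by simp [hT]
      have hsum := hdegsum q
      rw [hsplit, sum_insert hB5T] at hsum
      have hTsum : ∑ b ∈ T, (b.erase q).card = 2 * T.card := by
        rw [Finset.sum_congr rfl (fun b hb => ?_), sum_const, smul_eq_mul, mul_comm]
        simp only [hT, mem_filter] at hb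
        rw [card_erase_of_mem hb.2.1, hrest b hb.1 hb.2.2]
      have hB5e : (B5.erase q).card = 4 := by
        rw [card_erase_of_mem hqB5, hB5card]
      rw [hTsum, hB5e] at hsum
      have hfilt : B'.filter (fun b => q ∈ b) = insert B5 T := by
        rw [hB']
        ext b
        simp only [hT, mem_filter, mem_insert]
        constructor
        · rintro ⟨rfl | ⟨hb, hpb⟩, hqb⟩
          · exact Or.inl rfl
          · exact Or.inr ⟨hb, hqb, fun h => hpb (h ▸ hp)⟩
        · rintro (rfl | ⟨hb, hqb, hne⟩)
          · exact ⟨Or.inl rfl, hqB5⟩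
          · refine ⟨Or.inr ⟨hb, fun hpb => hne ?_⟩, hqb⟩
            exact huniq p q (Ne.symm hq) b B5 hb hB5 hpb hqb hp hqB5
      rw [hfilt, card_insert_of_notMem hB5T]
      omega
    · set Bq := B.filter (fun b => q ∈ b) with hBq
      have hsum := hdegsum q
      have hBqsum : ∑ b ∈ Bq, (b.erase q).card = 2 * Bq.card := by
        rw [Finset.sum_congr rfl (fun b hb => ?_), sum_const, smul_eq_mul, mul_comm]
        simp only [hBq, mem_filter] at hb
        rw [card_erase_of_mem hb.2, hrest b hb.1 (fun h => hqB5 (h ▸ hb.2))]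
      rw [hBqsum] at hsum
      obtain ⟨b0, ⟨hb0, hpb0, hqb0⟩, -⟩ := hsteiner p q (Ne.symm hq)
      have hb0Bq : b0 ∈ Bq := by simp [hBq, hb0, hqb0]
      have hfilt : B'.filter (fun b => q ∈ b) = Bq.erase b0 := by
        rw [hB']
        ext b
        simp only [hBq, mem_filter, mem_insert, mem_erase]
        constructor
        · rintro ⟨rfl | ⟨hb, hpb⟩, hqb⟩
          · exact absurd hqb hqB5
          · exact ⟨fun h => hpb (h ▸ hpb0), hb, hqb⟩
        · rintro ⟨hne, hb, hqb⟩
          refine ⟨Or.inr ⟨hb, fun hpb => hne ?_⟩, hqb⟩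
          exact huniq p q (Ne.symm hq) b b0 hb hb0 hpb hqb hpb0 hqb0
      rw [hfilt, card_erase_of_mem hb0Bq]
      have : 1 ≤ Bq.card := card_pos.mpr ⟨b0, hb0Bq⟩
      omega
  refine ⟨part1, ?_⟩
  -- part (ii)
  set F := B.filter (fun b => p ∉ b) with hF
  have hB5F : B5 ∉ F := by simp [hF, hp]
  have hcardB' : B'.card = F.card + 1 := by
    rw [hB', card_insert_of_notMem hB5F]
  have hdouble : ∑ q ∈ univ.erase p, (B'.filter (fun b => q ∈ b)).card
      = ∑ b ∈ B', (b.erase p).card := by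
    have h1 : ∀ q : V, (B'.filter (fun b => q ∈ b)).card
        = ∑ b ∈ B', if q ∈ b then 1 else 0 := fun q => by
      rw [card_filter]
    have h2 : ∀ b : Finset V, (b.erase p).card
        = ∑ q ∈ univ.erase p, if q ∈ b then 1 else 0 := fun b => by
      rw [← card_filter]
      congr 1
      ext x
      simp only [mem_filter, mem_erase, mem_univ, and_true]
      try tauto
    simp only [h1, h2]
    exact Finset.sum_comm
  have hRHS : ∑ b ∈ B', (b.erase p).card = 4 + 3 * F.card := by
    rw [hB', sum_insert hB5F, card_erase_of_mem hp, hB5card]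
    congr 1
    rw [Finset.sum_congr rfl (fun b hb => ?_), sum_const, smul_eq_mul, mul_comm]
    simp only [hF, mem_filter] at hb
    rw [erase_eq_of_notMem hb.2, hrest b hb.1 (fun h => hb.2 (h ▸ hp))]
  have hLHS : 2 * ∑ q ∈ univ.erase p, (B'.filter (fun b => q ∈ b)).card
      = (v - 1) * (v - 3) := by
    rw [Finset.mul_sum]
    rw [Finset.sum_congr rfl (fun q hq => part1 q (mem_erase.mp hq).1)]
    rw [sum_const, smul_eq_mul, card_erase_of_mem (mem_univ p), card_univ, hv]
  rw [hdouble, hRHS] at hLHS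
  obtain ⟨a, rfl⟩ : ∃ a, v = a + 5 := ⟨v - 5, by omega⟩
  have e1 : (a + 5 - 1) * (a + 5 - 3) = a * a + 6 * a + 8 := by
    have h1 : a + 5 - 1 = a + 4 := by omega
    have h2 : a + 5 - 3 = a + 2 := by omega
    rw [h1, h2]; ring
  rw [e1] at hLHS
  have e2 : (a + 5) ^ 2 - 4 * (a + 5) + 1 = a * a + 6 * a + 6 := by
    rw [show (a + 5) ^ 2 = a * a + 10 * a + 25 from by ring]
    generalize a * a = t
    omega
  rw [hcardB', e2]
  generalize a * a = t at hLHS ⊢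
  omega
end

section
/- Let G be a simple graph and let W be a closed walk in G of positive length such that: (non-reversing) no two consecutive steps of W traverse the same edge; (tailless) the first and last steps of W traverse different edges; and (abelian-forcing) for every ordered pair of adjacent vertices (u,v), the number of steps of W going from u to v equals the number of steps of W going from v to u. Then G contains two cycles, each of whose edges are edges traversed by W, whose edge sets are distinct; in particular W contains at least two different cycles. -/
/-!
A non-reversing closed walk of positive length contains a cycle: cut it at the first return of
its first edge `xy`. Either the part before it joins `y` to `x` avoiding `xy`, and its bypass
closes up with `xy` into a cycle, or it is a shorter non-reversing closed walk at `y`.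

Let `c` be such a cycle in `w`. If some edge `xy` of `w` is not on `c`, rotate `w` so that it
starts by crossing `xy` from `x` to `y`; taillessness keeps the rotated walk non-reversing. Running
the same argument forwards and backwards along it either joins `y` to `x` avoiding `xy`, giving a
cycle through `xy` (hence different from `c`), or yields non-reversing closed walks avoiding `xy`
at `y` and at `x`. Their cycles are edge-disjoint, since a common vertex would again join `y` to
`x` avoiding `xy`.

Otherwise every edge of `w` lies on `c`. A non-reversing walk along a cycle keeps its direction,
because two darts of a cycle with the same head coincide; so `w` never traverses an edge in both
directions, contradicting abelian-forcing.
-/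

open SimpleGraph

theorem List.IsChain.and {α : Type*} {R S : α → α → Prop} {l : List α} (hR : l.IsChain R)
    (hS : l.IsChain S) : l.IsChain fun a b => R a b ∧ S a b := by
  induction hR with
  | nil => exact .nil
  | singleton a => exact .singleton a
  | cons_cons hr _ ih =>
    rw [List.isChain_cons_cons] at hS
    exact .cons_cons ⟨hr, hS.1⟩ (ih hS.2)

theorem List.isChain_cons_append_append_singleton {α : Type*} {R : α → α → Prop}
    {l₁ l₂ : List α} {a : α} (h : (l₁ ++ a :: l₂).IsChain R)
    (hwrap : ∀ x ∈ (l₁ ++ a :: l₂).getLast?, ∀ y ∈ (l₁ ++ a :: l₂).head?, R x y) :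
    (a :: (l₂ ++ l₁ ++ [a])).IsChain R := by
  rw [List.append_assoc, ← List.cons_append]
  refine List.IsChain.append ?_ (h.prefix (by simp)) ?_
  · exact h.right_of_append
  · simpa [List.head?_append, List.getLast?_append] using hwrap

namespace SimpleGraph.Walk

variable {V : Type*} {G : SimpleGraph V}

theorem exists_eq_append_cons_of_mem_edges {u v : V} {e : Sym2 V} (p : G.Walk u v)
    (he : e ∈ p.edges) :
    ∃ (a b : V) (p₁ : G.Walk u a) (h : G.Adj a b) (p₂ : G.Walk b v),
      p = p₁.append (cons h p₂) ∧ s(a, b) = e ∧ e ∉ p₁.edges := by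
  induction p with
  | nil => simp at he
  | @cons u x v h p ih =>
    by_cases hfirst : s(u, x) = e
    · exact ⟨u, x, nil, h, p, rfl, hfirst, by simp⟩
    · rw [edges_cons, List.mem_cons] at he
      obtain ⟨a, b, p₁, h', p₂, rfl, hab, he₁⟩ := ih (he.resolve_left (Ne.symm hfirst))
      exact ⟨a, b, cons h p₁, h', p₂, rfl, hab, by simp [he₁, Ne.symm hfirst]⟩

theorem exists_rotation_of_mem_edges {v : V} {e : Sym2 V} (p : G.Walk v v)
    (hp : p.edges.IsChain (· ≠ ·)) (htail : p.edges.head? ≠ p.edges.getLast?) (he : e ∈ p.edges) :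
    ∃ (x y : V) (q : G.Walk y x), G.Adj x y ∧ s(x, y) = e ∧
      (s(x, y) :: (q.edges ++ [s(x, y)])).IsChain (· ≠ ·) ∧ (s(x, y) :: q.edges).Perm p.edges := by
  obtain ⟨x, y, p₁, h, p₂, rfl, rfl, -⟩ := p.exists_eq_append_cons_of_mem_edges he
  simp only [edges_append, edges_cons] at hp htail ⊢
  refine ⟨x, y, p₂.append p₁, h, rfl, ?_, ?_⟩
  · rw [edges_append]
    exact List.isChain_cons_append_append_singleton hp fun a ha b hb hab =>
      htail (by rw [Option.mem_def] at ha hb; rw [hb, ha, hab])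
  · rw [edges_append]
    exact (List.perm_append_comm.cons _).trans List.perm_middle.symm

theorem isCycle_cons_bypass [DecidableEq V] {x y : V} (h : G.Adj x y) {r : G.Walk y x}
    (hr : s(x, y) ∉ r.edges) : (cons h r.bypass).IsCycle :=
  (cons_isCycle_iff _ h).mpr ⟨r.bypass_isPath, fun he => hr (r.edges_bypass_subset_edges he)⟩

theorem exists_prefix_avoiding_edge {x y : V} (q : G.Walk y x)
    (hq : (s(x, y) :: q.edges).IsChain (· ≠ ·)) :
    (∃ r : G.Walk y x, s(x, y) ∉ r.edges ∧ r.edges <+: q.edges) ∨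
      ∃ r : G.Walk y y, 0 < r.length ∧ s(x, y) ∉ r.edges ∧ r.edges <+: q.edges := by
  by_cases he : s(x, y) ∈ q.edges
  · obtain ⟨a, b, r, h', q₂, rfl, hab, hr⟩ := q.exists_eq_append_cons_of_mem_edges he
    have hpre : r.edges <+: (r.append (cons h' q₂)).edges := by simp [edges_append]
    rcases Sym2.eq_iff.mp hab with ⟨rfl, rfl⟩ | ⟨rfl, rfl⟩
    · exact .inl ⟨r, hr, hpre⟩
    · refine .inr ⟨r, ?_, hr, hpre⟩
      cases r with
      | nil => simp [Sym2.eq_swap] at hq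
      | cons => simp
  · exact .inl ⟨q, he, List.prefix_refl _⟩

theorem exists_isCycle_edges_subset [DecidableEq V] {v : V} (p : G.Walk v v)
    (hpos : 0 < p.length) (hp : p.edges.IsChain (· ≠ ·)) :
    ∃ (a : V) (c : G.Walk a a), c.IsCycle ∧ c.edges ⊆ p.edges := by
  induction hn : p.length using Nat.strong_induction_on generalizing v p with
  | _ n ih =>
  cases p with
  | nil => simp at hpos
  | @cons _ y _ h q =>
    rw [edges_cons] at hp ⊢
    rcases exists_prefix_avoiding_edge q hp with ⟨r, hr, hpre⟩ | ⟨r, hrpos, hr, hpre⟩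
    · exact ⟨v, cons h r.bypass, isCycle_cons_bypass h hr,
        List.cons_subset_cons _ (List.Subset.trans r.edges_bypass_subset_edges hpre.subset)⟩
    · have hlen : r.length < n := by
        have := hpre.length_le
        simp only [length_edges] at this
        simp only [length_cons] at hn
        omega
      obtain ⟨a, c, hc, hsub⟩ := ih _ hlen r hrpos (hp.tail.prefix hpre) rfl
      exact ⟨a, c, hc,
        List.Subset.trans hsub (List.Subset.trans hpre.subset (List.subset_cons_self _ _))⟩

theorem exists_walk_edges_subset_of_mem_support [DecidableEq V] {x x' y y' s : V}
    (r₁ : G.Walk y y') (r₂ : G.Walk x x') (hs₁ : s ∈ r₁.support) (hs₂ : s ∈ r₂.support) :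
    ∃ r : G.Walk y x, r.edges ⊆ r₁.edges ++ r₂.edges := by
  refine ⟨(r₁.takeUntil s hs₁).append (r₂.takeUntil s hs₂).reverse, fun f hf => ?_⟩
  rw [edges_append, edges_reverse, List.mem_append, List.mem_reverse] at hf
  exact List.mem_append.mpr (hf.imp (edges_takeUntil_subset_edges _ _ ·)
    (edges_takeUntil_subset_edges _ _ ·))

theorem exists_isCycle_mem_edges_or_disjoint [DecidableEq V] {x y : V} (h : G.Adj x y)
    (q : G.Walk y x) (hq : (s(x, y) :: (q.edges ++ [s(x, y)])).IsChain (· ≠ ·)) :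
    (∃ (a : V) (c : G.Walk a a), c.IsCycle ∧ s(x, y) ∈ c.edges ∧ c.edges ⊆ s(x, y) :: q.edges) ∨
      ∃ (a : V) (c₁ : G.Walk a a) (b : V) (c₂ : G.Walk b b), c₁.IsCycle ∧ c₂.IsCycle ∧
        c₁.edges ⊆ q.edges ∧ c₂.edges ⊆ q.edges ∧ ∀ f ∈ c₁.edges, f ∉ c₂.edges := by
  have hcross (r : G.Walk y x) (hr : s(x, y) ∉ r.edges) (hrq : r.edges ⊆ q.edges) :
      ∃ (a : V) (c : G.Walk a a), c.IsCycle ∧ s(x, y) ∈ c.edges ∧ c.edges ⊆ s(x, y) :: q.edges :=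
    ⟨x, cons h r.bypass, isCycle_cons_bypass h hr, by simp,
      List.cons_subset_cons _ (List.Subset.trans r.edges_bypass_subset_edges hrq)⟩
  have hq₁ : (s(x, y) :: q.edges).IsChain (· ≠ ·) := hq.prefix ⟨[s(x, y)], by simp⟩
  have hq₂ : (s(y, x) :: q.reverse.edges).IsChain (· ≠ ·) := by
    refine (List.isChain_reverse.mpr (hq.imp fun _ _ => Ne.symm)).prefix ⟨[s(x, y)], ?_⟩
    simp [Sym2.eq_swap]
  rcases exists_prefix_avoiding_edge q hq₁ with ⟨r, hr, hpre⟩ | ⟨r₁, hpos₁, hr₁, hpre₁⟩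
  · exact .inl (hcross r hr hpre.subset)
  rcases exists_prefix_avoiding_edge q.reverse hq₂ with ⟨r, hr, hpre⟩ | ⟨r₂, hpos₂, hr₂, hpre₂⟩
  · exact .inl (hcross r.reverse (by simpa [Sym2.eq_swap] using hr) (by simpa using hpre.subset))
  rw [Sym2.eq_swap] at hr₂
  have hr₂q : r₂.edges ⊆ q.edges := fun f hf => by simpa using hpre₂.subset hf
  obtain ⟨a, c₁, hc₁, hsub₁⟩ := exists_isCycle_edges_subset r₁ hpos₁ (hq₁.tail.prefix hpre₁)
  obtain ⟨b, c₂, hc₂, hsub₂⟩ := exists_isCycle_edges_subset r₂ hpos₂ (hq₂.tail.prefix hpre₂)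
  by_cases hmeet : ∃ f ∈ c₁.edges, f ∈ c₂.edges
  · obtain ⟨f, hf₁, hf₂⟩ := hmeet
    induction f using Sym2.ind with
    | _ s _ =>
    obtain ⟨r, hr⟩ := exists_walk_edges_subset_of_mem_support r₁ r₂
      (r₁.fst_mem_support_of_mem_edges (hsub₁ hf₁)) (r₂.fst_mem_support_of_mem_edges (hsub₂ hf₂))
    refine .inl (hcross r (fun he => ?_) fun f hf => ?_)
    · exact (List.mem_append.mp (hr he)).elim (hr₁ ·) (hr₂ ·)
    · exact (List.mem_append.mp (hr hf)).elim (hpre₁.subset ·) (hr₂q ·)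
  · exact .inr ⟨a, c₁, b, c₂, hc₁, hc₂, List.Subset.trans hsub₁ hpre₁.subset,
      List.Subset.trans hsub₂ hr₂q, fun f hf₁ hf₂ => hmeet ⟨f, hf₁, hf₂⟩⟩

theorem IsCycle.symm_notMem_darts {a : V} {c : G.Walk a a} (hc : c.IsCycle) {d : G.Dart}
    (hd : d ∈ c.darts) : d.symm ∉ c.darts := fun hs =>
  d.symm_ne (List.inj_on_of_nodup_map hc.edges_nodup hs hd d.edge_symm)

theorem IsCycle.mem_darts_of_dartAdj {a : V} {c : G.Walk a a} (hc : c.IsCycle) {d₁ d₂ : G.Dart}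
    (hd₁ : d₁ ∈ c.darts) (hadj : G.DartAdj d₁ d₂) (hne : d₁.edge ≠ d₂.edge)
    (he : d₂.edge ∈ c.edges) : d₂ ∈ c.darts := by
  obtain ⟨d, hd, hde⟩ := List.mem_map.mp he
  rcases (dart_edge_eq_iff d d₂).mp hde with rfl | rfl
  · exact hd
  · have hsnd : d₂.symm = d₁ := List.inj_on_of_nodup_map
      (by rw [map_snd_darts]; exact hc.support_nodup) hd hd₁ hadj.symm
    exact absurd (by rw [← hsnd, Dart.edge_symm]) hne

theorem IsCycle.darts_subset_of_head_mem {a u v : V} {c : G.Walk a a} (hc : c.IsCycle)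
    (p : G.Walk u v) (hp : p.edges.IsChain (· ≠ ·)) (hsub : p.edges ⊆ c.edges)
    (hhead : ∀ d ∈ p.darts.head?, d ∈ c.darts) : p.darts ⊆ c.darts := by
  have hchain : p.darts.IsChain fun d₁ d₂ => G.DartAdj d₁ d₂ ∧ d₁.edge ≠ d₂.edge :=
    p.isChain_dartAdj_darts.and ((List.isChain_map _).mp hp)
  refine List.IsChain.induction (· ∈ c.darts) _ (List.IsChain.iff_mem.mp hchain) ?_
    fun hne => hhead _ (List.head?_eq_some_head hne)
  rintro d₁ d₂ ⟨-, hd₂, hadj, hne⟩ hd₁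
  exact hc.mem_darts_of_dartAdj hd₁ hadj hne (hsub (List.mem_map_of_mem hd₂))

theorem IsCycle.symm_notMem_darts_of_edges_subset {a u v : V} {c : G.Walk a a}
    (hc : c.IsCycle) (p : G.Walk u v) (hp : p.edges.IsChain (· ≠ ·)) (hsub : p.edges ⊆ c.edges)
    {d : G.Dart} (hd : d ∈ p.darts) : d.symm ∉ p.darts := by
  intro hs
  obtain ⟨d₀, ds, hds⟩ := List.exists_cons_of_ne_nil (List.ne_nil_of_mem hd)
  -- `p` runs along `c` or along its reverse, according to its first dart
  have along (c' : G.Walk a a) (hc' : c'.IsCycle) (hsub' : p.edges ⊆ c'.edges)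
      (h₀ : d₀ ∈ c'.darts) : False :=
    have hpc := hc'.darts_subset_of_head_mem p hp hsub' (by simpa [hds] using h₀)
    hc'.symm_notMem_darts (hpc hd) (hpc hs)
  obtain ⟨d', hd', hd'e⟩ :=
    List.mem_map.mp (hsub (List.mem_map_of_mem (f := Dart.edge) (hds ▸ List.mem_cons_self)))
  rcases (dart_edge_eq_iff d' d₀).mp hd'e with rfl | rfl
  · exact along c hc hsub hd'
  · exact along c.reverse hc.reverse (by simpa using hsub) (by simpa using hd')

end SimpleGraph.Walk

theorem stmt_10_general {V : Type*} [DecidableEq V] (G : SimpleGraph V)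
    (u : V) (w : G.Walk u u)
    (hpos : 0 < w.length)
    (hnonrev : List.Chain' (· ≠ ·) w.edges)
    (htailless : w.edges.head? ≠ w.edges.getLast?)
    (habelian : ∀ d : G.Dart, w.darts.count d = w.darts.count d.symm) :
    ∃ (a : V) (c₁ : G.Walk a a) (b : V) (c₂ : G.Walk b b),
      c₁.IsCycle ∧ c₂.IsCycle ∧
      (∀ e ∈ c₁.edges, e ∈ w.edges) ∧
      (∀ e ∈ c₂.edges, e ∈ w.edges) ∧
      c₁.edges.toFinset ≠ c₂.edges.toFinset := by
  obtain ⟨a, c, hc, hcw⟩ := w.exists_isCycle_edges_subset hpos hnonrev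
  by_cases hout : ∃ e ∈ w.edges, e ∉ c.edges
  · obtain ⟨e, hew, hec⟩ := hout
    obtain ⟨x, y, q, h, rfl, hq, hperm⟩ := w.exists_rotation_of_mem_edges hnonrev htailless hew
    rcases Walk.exists_isCycle_mem_edges_or_disjoint h q hq with ⟨b, χ, hχ, heχ, hχq⟩ |
      ⟨b₁, c₁, b₂, c₂, hc₁, hc₂, h₁, h₂, hdisj⟩
    · refine ⟨a, c, b, χ, hc, hχ, hcw, fun f hf => hperm.subset (hχq hf), fun heq => hec ?_⟩
      rw [← List.mem_toFinset, heq, List.mem_toFinset]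
      exact heχ
    · refine ⟨b₁, c₁, b₂, c₂, hc₁, hc₂, fun f hf => hperm.subset (.tail _ (h₁ hf)),
        fun f hf => hperm.subset (.tail _ (h₂ hf)), fun heq => ?_⟩
      obtain ⟨f, hf⟩ := List.exists_mem_of_ne_nil _ (Walk.edges_eq_nil.not.mpr hc₁.not_nil)
      exact hdisj f hf (by rw [← List.mem_toFinset, ← heq, List.mem_toFinset]; exact hf)
  · have hall : w.edges ⊆ c.edges := fun e he => of_not_not fun hec => hout ⟨e, he, hec⟩
    obtain ⟨d, hd⟩ := List.exists_mem_of_ne_nil w.darts fun h => by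
      simp [← w.length_darts, h] at hpos
    have hsymm : d.symm ∈ w.darts :=
      List.count_pos_iff.mp (habelian d ▸ List.count_pos_iff.mpr hd)
    exact (hc.symm_notMem_darts_of_edges_subset w hnonrev hall hd hsymm).elim

theorem stmt_10 {V : Type*} [DecidableEq V] (G : SimpleGraph V)
    [DecidableRel G.Adj]
    (u : V) (w : G.Walk u u)
    (hpos : 0 < w.length)
    (hnonrev : List.Chain' (· ≠ ·) w.edges)
    (htailless : w.edges.head? ≠ w.edges.getLast?)
    (habelian : ∀ d : G.Dart, w.darts.count d = w.darts.count d.symm) :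
    ∃ (a : V) (c₁ : G.Walk a a) (b : V) (c₂ : G.Walk b b),
      c₁.IsCycle ∧ c₂.IsCycle ∧
      (∀ e ∈ c₁.edges, e ∈ w.edges) ∧
      (∀ e ∈ c₂.edges, e ∈ w.edges) ∧
      c₁.edges.toFinset ≠ c₂.edges.toFinset :=
  stmt_10_general G u w hpos hnonrev htailless habelian
end

section
/- Let d_v ≥ 3 and let P be a J×L protograph that is (d_v,d_c)-regular (every column sums to d_v and every row sums to d_c) and avoids inevitable cycles of length less than 14, i.e., P contains none of the ICI patterns of length 6, 8, 10, or 12 (nor their transposes). Let n2 = n2(P) be the number of entries of P equal to 2. Then: (i) C(J−n2, 2) ≥ n2 · C(d_v−2, 2); and (ii) (J−n2)·d_c ≥ n2·(d_v−2). -/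
open Matrix Finset

/-!
By the absence of `[2 2]` the `2`s of `P` lie in distinct rows and columns, and in the column of
a `2` the other `d_v - 2` units of weight are `1`s in distinct rows. By the absence of
`[[2,1],[0,2]]` none of these rows contains a `2`, so this fan of the `2` lies among the `J - n₂`
rows free of `2`s. By the absence of `[[2,1,1],[0,1,1]]ᵀ` two different fans share at most one
row, so the `n₂` fans contribute `n₂ · C(d_v - 2, 2)` distinct pairs of `2`-free rows, giving (i).
The fans also sit in different columns, so their `n₂ (d_v - 2)` ones are distinct entries of the
`2`-free rows, whose total weight is `(J - n₂) d_c`, giving (ii).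
-/

section Patterns

variable {J L : ℕ} {P : Matrix (Fin J) (Fin L) ℕ}

lemma containsPat_pat8_of_row {j : Fin J} {l l' : Fin L} (hl : l ≠ l')
    (h : 2 ≤ P j l) (h' : 2 ≤ P j l') : containsPat P pat8 := by
  refine Or.inl ⟨![j], ![l, l'], Function.injective_of_subsingleton _,
    injective_pair_iff_ne.2 hl, ?_⟩
  intro a b; fin_cases a; fin_cases b <;> simp [pat8, *]

lemma containsPat_pat8_of_col {j j' : Fin J} {l : Fin L} (hj : j ≠ j')
    (h : 2 ≤ P j l) (h' : 2 ≤ P j' l) : containsPat P pat8 := by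
  refine Or.inr ⟨![j, j'], ![l], injective_pair_iff_ne.2 hj,
    Function.injective_of_subsingleton _, ?_⟩
  intro a b; fin_cases a <;> fin_cases b <;> simp [pat8, *]

lemma containsPat_pat12a {j j' : Fin J} {l l' : Fin L} (hj : j ≠ j') (hl : l ≠ l')
    (h₁ : 2 ≤ P j l) (h₂ : 1 ≤ P j' l) (h₃ : 2 ≤ P j' l') : containsPat P pat12a := by
  refine Or.inl ⟨![j', j], ![l', l], injective_pair_iff_ne.2 hj.symm,
    injective_pair_iff_ne.2 hl.symm, ?_⟩
  intro a b; fin_cases a <;> fin_cases b <;> simp [pat12a, *]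

lemma containsPat_pat12b {j j₁ j₂ : Fin J} {l l' : Fin L}
    (hj₁ : j ≠ j₁) (hj₂ : j ≠ j₂) (hj₁₂ : j₁ ≠ j₂) (hl : l ≠ l') (h : 2 ≤ P j l)
    (h₁ : 1 ≤ P j₁ l) (h₁' : 1 ≤ P j₁ l') (h₂ : 1 ≤ P j₂ l) (h₂' : 1 ≤ P j₂ l') :
    containsPat P pat12b := by
  refine Or.inr ⟨![j, j₁, j₂], ![l, l'], ?_, injective_pair_iff_ne.2 hl, ?_⟩
  · intro a b; fin_cases a <;> fin_cases b <;> simp_all [eq_comm]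
  · intro a b; fin_cases a <;> fin_cases b <;> simp [pat12b, *]

end Patterns

section Counting

variable {J L : ℕ} (P : Matrix (Fin J) (Fin L) ℕ)

def twos : Finset (Fin J × Fin L) := univ.filter fun p => P p.1 p.2 = 2

def onesInCol (l : Fin L) : Finset (Fin J) := univ.filter fun j => P j l = 1

def twoFreeRows : Finset (Fin J) := ((twos P).image Prod.fst)ᶜ

variable {P}

lemma numTwos_eq_card_twos : numTwos P = #(twos P) := rfl

lemma mem_twos {p : Fin J × Fin L} : p ∈ twos P ↔ P p.1 p.2 = 2 := by
  simp [twos]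

lemma mem_onesInCol {l : Fin L} {j : Fin J} : j ∈ onesInCol P l ↔ P j l = 1 := by
  simp [onesInCol]

lemma mem_twoFreeRows {j : Fin J} : j ∈ twoFreeRows P ↔ ∀ l, P j l ≠ 2 := by
  simp [twoFreeRows, twos]

lemma injOn_snd_twos (h8 : ¬ containsPat P pat8) : Set.InjOn Prod.snd
    (twos P : Set (Fin J × Fin L)) := by
  rintro ⟨j, l⟩ hp ⟨j', l'⟩ hp' (rfl : l = l')
  simp only [mem_coe, mem_twos] at hp hp'
  by_contra hne
  exact h8 (containsPat_pat8_of_col (fun h => hne (by rw [h])) hp.ge hp'.ge)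

lemma injOn_fst_twos (h8 : ¬ containsPat P pat8) : Set.InjOn Prod.fst
    (twos P : Set (Fin J × Fin L)) := by
  rintro ⟨j, l⟩ hp ⟨j', l'⟩ hp' (rfl : j = j')
  simp only [mem_coe, mem_twos] at hp hp'
  by_contra hne
  exact h8 (containsPat_pat8_of_row (fun h => hne (by rw [h])) hp.ge hp'.ge)

lemma card_twoFreeRows (h8 : ¬ containsPat P pat8) : #(twoFreeRows P) = J - numTwos P := by
  rw [twoFreeRows, card_compl, card_image_of_injOn (injOn_fst_twos h8), Fintype.card_fin,
    numTwos_eq_card_twos]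

lemma card_onesInCol {dv : ℕ} {j : Fin J} {l : Fin L} (hcol : ∑ i, P i l = dv)
    (h8 : ¬ containsPat P pat8) (hj : P j l = 2) : #(onesInCol P l) = dv - 2 := by
  have hle : ∀ i ∈ univ.erase j, P i l ≤ 1 := fun i hi => by
    by_contra! h
    exact h8 (containsPat_pat8_of_col (ne_of_mem_erase hi) h hj.ge)
  have hrest : ∑ i ∈ univ.erase j, P i l = #(onesInCol P l) := by
    have hj' : j ∉ onesInCol P l := by simp [mem_onesInCol, hj]
    rw [← erase_eq_of_notMem hj', onesInCol, ← filter_erase, card_filter]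
    exact sum_congr rfl fun i hi => by have := hle i hi; split_ifs <;> omega
  rw [← sum_erase_add _ _ (mem_univ j), hrest, hj] at hcol
  omega

lemma onesInCol_subset_twoFreeRows {j : Fin J} {l : Fin L} (h12a : ¬ containsPat P pat12a)
    (hj : P j l = 2) : onesInCol P l ⊆ twoFreeRows P := by
  intro i hi
  rw [mem_onesInCol] at hi
  refine mem_twoFreeRows.2 fun l' hl' => ?_
  refine h12a (containsPat_pat12a (j' := i) (l' := l') ?_ ?_ hj.ge hi.ge hl'.ge)
  · rintro rfl; omega
  · rintro rfl; omega

lemma disjoint_powersetCard_two_onesInCol {j : Fin J} {l l' : Fin L}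
    (h12b : ¬ containsPat P pat12b) (hj : P j l = 2) (hl : l ≠ l') :
    Disjoint ((onesInCol P l).powersetCard 2) ((onesInCol P l').powersetCard 2) := by
  rw [disjoint_left]
  intro s hs hs'
  rw [mem_powersetCard] at hs hs'
  obtain ⟨j₁, j₂, hj₁₂, rfl⟩ := card_eq_two.1 hs.2
  simp only [insert_subset_iff, singleton_subset_iff, mem_onesInCol] at hs hs'
  refine h12b (containsPat_pat12b ?_ ?_ hj₁₂ hl hj.ge hs.1.1.ge hs'.1.1.ge hs.1.2.ge hs'.1.2.ge)
  · rintro rfl; omega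
  · rintro rfl; omega

lemma numTwos_mul_choose_le {dv : ℕ} (hcol : ∀ l, ∑ j, P j l = dv)
    (h8 : ¬ containsPat P pat8) (h12a : ¬ containsPat P pat12a)
    (h12b : ¬ containsPat P pat12b) :
    numTwos P * (dv - 2).choose 2 ≤ (J - numTwos P).choose 2 := by
  have hdisj : (twos P : Set (Fin J × Fin L)).PairwiseDisjoint
      fun p => (onesInCol P p.2).powersetCard 2 := fun p hp q hq hpq =>
    disjoint_powersetCard_two_onesInCol h12b (mem_twos.1 hp)
      fun h => hpq (injOn_snd_twos h8 hp hq h)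
  have hsub : (twos P).biUnion (fun p => (onesInCol P p.2).powersetCard 2) ⊆
      (twoFreeRows P).powersetCard 2 :=
    biUnion_subset.2 fun p hp =>
      powersetCard_mono (onesInCol_subset_twoFreeRows h12a (mem_twos.1 hp))
  calc numTwos P * (dv - 2).choose 2
      = ∑ p ∈ twos P, #((onesInCol P p.2).powersetCard 2) := by
        rw [numTwos_eq_card_twos, ← smul_eq_mul, ← sum_const]
        exact sum_congr rfl fun p hp => by
          rw [card_powersetCard, card_onesInCol (hcol p.2) h8 (mem_twos.1 hp)]
    _ = #((twos P).biUnion fun p => (onesInCol P p.2).powersetCard 2) :=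
        (card_biUnion hdisj).symm
    _ ≤ #((twoFreeRows P).powersetCard 2) := card_le_card hsub
    _ = (J - numTwos P).choose 2 := by rw [card_powersetCard, card_twoFreeRows h8]

lemma numTwos_mul_le {dv dc : ℕ} (hreg : protoRegular P dv dc)
    (h8 : ¬ containsPat P pat8) (h12a : ¬ containsPat P pat12a) :
    numTwos P * (dv - 2) ≤ (J - numTwos P) * dc := by
  calc numTwos P * (dv - 2)
      = ∑ p ∈ twos P, #(onesInCol P p.2) := by
        rw [numTwos_eq_card_twos, ← smul_eq_mul, ← sum_const]
        exact sum_congr rfl fun p hp => (card_onesInCol (hreg.1 p.2) h8 (mem_twos.1 hp)).symm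
    _ ≤ ∑ p ∈ twos P, ∑ j ∈ twoFreeRows P, P j p.2 := by
        refine sum_le_sum fun p hp => ?_
        rw [card_eq_sum_ones]
        exact (sum_le_sum fun j hj => (mem_onesInCol.1 hj).ge).trans
          (sum_le_sum_of_subset (onesInCol_subset_twoFreeRows h12a (mem_twos.1 hp)))
    _ = ∑ j ∈ twoFreeRows P, ∑ l ∈ (twos P).image Prod.snd, P j l := by
        rw [sum_comm]
        exact sum_congr rfl fun j _ => (sum_image (injOn_snd_twos h8)).symm
    _ ≤ ∑ j ∈ twoFreeRows P, ∑ l, P j l :=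
        sum_le_sum fun j _ => sum_le_sum_of_subset (subset_univ _)
    _ = (J - numTwos P) * dc := by
        rw [sum_congr rfl fun j _ => hreg.2 j, sum_const, smul_eq_mul, card_twoFreeRows h8]

end Counting

theorem stmt_11_general {J L : ℕ} (dv dc : ℕ)
    (P : Matrix (Fin J) (Fin L) ℕ)
    (hreg : protoRegular P dv dc)
    (havoid : avoidsLt14 P) :
    Nat.choose (J - numTwos P) 2 ≥ numTwos P * Nat.choose (dv - 2) 2 ∧
    (J - numTwos P) * dc ≥ numTwos P * (dv - 2) := by
  obtain ⟨⟨⟨-, h8⟩, -⟩, h12a, h12b, -⟩ := havoid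
  exact ⟨numTwos_mul_choose_le hreg.1 h8 h12a h12b, numTwos_mul_le hreg h8 h12a⟩

theorem stmt_11 {J L : ℕ} (dv dc : ℕ) (hdv : 3 ≤ dv)
    (P : Matrix (Fin J) (Fin L) ℕ)
    (hreg : protoRegular P dv dc)
    (havoid : avoidsLt14 P) :
    Nat.choose (J - numTwos P) 2 ≥ numTwos P * Nat.choose (dv - 2) 2 ∧
    (J - numTwos P) * dc ≥ numTwos P * (dv - 2) :=
  stmt_11_general dv dc P hreg havoid
end

section
/- For every natural number J with J ≡ 2 (mod 6) and J ≥ 14, there exists a J×L protograph P with 6·L = J·(J−2) such that P is (3,(J−2)/2)-regular (every column sums to 3 and every row sums to (J−2)/2), P has exactly J−2 entries equal to 2, and P avoids inevitable cycles of length less than 14, i.e., P contains none of the ICI patterns of length 6, 8, 10, or 12 (nor their transposes). -/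
open Matrix Finset

/-!
Bose's construction turns ℤ/(2k+1) × ℤ/3 into a Steiner quasigroup, i.e. a Steiner triple
system on 6k+3 points. Deleting the three points of one triple leaves 6k points and the triples
avoiding them; two points lie on at most one of these triples, and every point lies on 3k-2.

The protograph has a row for each point and two extra rows, a column for each point and a column
for each triple. A point column has its 2 in the row of the point and a 1 in one of the extra
rows, split so that both extra rows receive 3k ones; a triple column has 1s in the rows of its
points. Any two rows then share at most one column of positive entries, which excludes every ICI
pattern containing a positive 2×2 submatrix, and the entries equal to 2 sit on a diagonal whose
rows and columns share no other positive entries, which excludes `[3]`, `[2 2]` and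
`[[2,1],[0,2]]`.
-/

open Function

section Patterns

variable {R C R' C' m n : Type*}

def HasSubpattern (E : Matrix R C ℕ) (Q : Matrix m n ℕ) : Prop :=
  ∃ r : m → R, ∃ c : n → C, Injective r ∧ Injective c ∧ ∀ i j, Q i j ≤ E (r i) (c j)

lemma HasSubpattern.of_submatrix {E : Matrix R C ℕ} {Q : Matrix m n ℕ} {f : R' → R}
    {g : C' → C} (hf : Injective f) (hg : Injective g) :
    HasSubpattern (E.submatrix f g) Q → HasSubpattern E Q
  | ⟨r, c, hr, hc, h⟩ => ⟨f ∘ r, g ∘ c, hf.comp hr, hg.comp hc, h⟩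

lemma not_containsPat_submatrix {J L p q : ℕ} {E : Matrix R C ℕ}
    {Q : Matrix (Fin p) (Fin q) ℕ} (eR : Fin J ≃ R) (eC : Fin L ≃ C)
    (hQ : ¬ HasSubpattern E Q) (hQt : ¬ HasSubpattern E Qᵀ) :
    ¬ containsPat (E.submatrix eR eC) Q := by
  rintro (h | h)
  exacts [hQ (HasSubpattern.of_submatrix eR.injective eC.injective h),
    hQt (HasSubpattern.of_submatrix eR.injective eC.injective h)]

def RectangleFree (E : Matrix R C ℕ) : Prop :=
  ∀ ⦃r r' c c'⦄, 0 < E r c → 0 < E r c' → 0 < E r' c → 0 < E r' c' → r = r' ∨ c = c'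

lemma RectangleFree.not_hasSubpattern {E : Matrix R C ℕ} (hE : RectangleFree E)
    {Q : Matrix m n ℕ} {i i' : m} {j j' : n} (hi : i ≠ i') (hj : j ≠ j')
    (hQ : 0 < Q i j ∧ 0 < Q i j' ∧ 0 < Q i' j ∧ 0 < Q i' j') : ¬ HasSubpattern E Q := by
  rintro ⟨r, c, hr, hc, hle⟩
  obtain ⟨h₁, h₂, h₃, h₄⟩ := hQ
  rcases hE (h₁.trans_le (hle i j)) (h₂.trans_le (hle i j')) (h₃.trans_le (hle i' j))
    (h₄.trans_le (hle i' j')) with h | h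
  exacts [hi (hr h), hj (hc h)]

end Patterns

section Protograph

variable {V B U : Type*} [DecidableEq V] [DecidableEq U]

def tripleProtograph (I : V → B → Prop) [DecidableRel I] (g : V → U) :
    Matrix (V ⊕ U) (V ⊕ B) ℕ :=
  fromBlocks (diagonal fun _ => 2) (of fun p b => if I p b then 1 else 0)
    (of fun u q => if g q = u then 1 else 0) 0

variable {I : V → B → Prop} [DecidableRel I] {g : V → U}

@[simp] lemma tripleProtograph_inl_inl (p q : V) :
    tripleProtograph I g (.inl p) (.inl q) = if p = q then 2 else 0 :=
  diagonal_apply (fun _ => 2) p q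

@[simp] lemma tripleProtograph_inl_inr (p : V) (b : B) :
    tripleProtograph I g (.inl p) (.inr b) = if I p b then 1 else 0 := rfl

@[simp] lemma tripleProtograph_inr_inl (u : U) (q : V) :
    tripleProtograph I g (.inr u) (.inl q) = if g q = u then 1 else 0 := rfl

@[simp] lemma tripleProtograph_inr_inr (u : U) (b : B) :
    tripleProtograph I g (.inr u) (.inr b) = 0 := rfl

lemma tripleProtograph_le_two (r : V ⊕ U) (c : V ⊕ B) : tripleProtograph I g r c ≤ 2 := by
  rcases r with p | u <;> rcases c with q | b <;> simp only [tripleProtograph_inl_inl,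
    tripleProtograph_inl_inr, tripleProtograph_inr_inl, tripleProtograph_inr_inr] <;>
    try split_ifs
  all_goals omega

lemma exists_eq_inl_of_two_le_tripleProtograph {r : V ⊕ U} {c : V ⊕ B}
    (h : 2 ≤ tripleProtograph I g r c) : ∃ p, r = .inl p ∧ c = .inl p := by
  rcases r with p | u <;> rcases c with q | b <;> simp only [tripleProtograph_inl_inl,
    tripleProtograph_inl_inr, tripleProtograph_inr_inl, tripleProtograph_inr_inr] at h <;>
    try split_ifs at h with hpq
  all_goals try omega
  exact ⟨p, rfl, by rw [hpq]⟩

lemma eq_of_pos_tripleProtograph_inl_inl {p q : V}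
    (h : 0 < tripleProtograph I g (.inl p) (.inl q)) : p = q := by
  by_contra hpq
  simp [hpq] at h

lemma rel_of_pos_tripleProtograph_inl_inr {p : V} {b : B}
    (h : 0 < tripleProtograph I g (.inl p) (.inr b)) : I p b := by
  by_contra hp
  simp [hp] at h

lemma exists_eq_inl_of_pos_tripleProtograph_inr {u : U} {c : V ⊕ B}
    (h : 0 < tripleProtograph I g (.inr u) c) : ∃ q, c = .inl q ∧ g q = u := by
  rcases c with q | b
  · by_contra hq
    simp_all
  · simp at h

lemma eq_or_eq_of_pos_tripleProtograph_inl {r : V ⊕ U} {q : V}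
    (h : 0 < tripleProtograph I g r (.inl q)) : r = .inl q ∨ r = .inr (g q) := by
  rcases r with p | u
  · exact .inl (congrArg _ (eq_of_pos_tripleProtograph_inl_inl h))
  · obtain ⟨q', hq', rfl⟩ := exists_eq_inl_of_pos_tripleProtograph_inr h
    cases hq'
    exact .inr rfl

lemma eq_inl_of_pos_tripleProtograph {p : V} {u : U} {c : V ⊕ B}
    (h : 0 < tripleProtograph I g (.inl p) c) (h' : 0 < tripleProtograph I g (.inr u) c) :
    c = .inl p := by
  obtain ⟨q, rfl, -⟩ := exists_eq_inl_of_pos_tripleProtograph_inr h'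
  rw [eq_of_pos_tripleProtograph_inl_inl h]

lemma rectangleFree_tripleProtograph
    (hI : ∀ ⦃p q b b'⦄, I p b → I q b → I p b' → I q b' → p = q ∨ b = b') :
    RectangleFree (tripleProtograph I g) := by
  suffices key : ∀ ⦃r r' c q⦄, 0 < tripleProtograph I g r (.inl q) →
      0 < tripleProtograph I g r c → 0 < tripleProtograph I g r' (.inl q) →
      0 < tripleProtograph I g r' c → r = r' ∨ .inl q = c by
    intro r r' c c' h₁ h₂ h₃ h₄
    rcases c with q | b
    · exact key h₁ h₂ h₃ h₄
    rcases c' with q' | b'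
    · exact (key h₂ h₁ h₄ h₃).imp id Eq.symm
    rcases r with p | u
    · rcases r' with p' | u'
      · exact (hI (rel_of_pos_tripleProtograph_inl_inr h₁)
          (rel_of_pos_tripleProtograph_inl_inr h₃) (rel_of_pos_tripleProtograph_inl_inr h₂)
          (rel_of_pos_tripleProtograph_inl_inr h₄)).imp (congrArg _) (congrArg _)
      · simp at h₃
    · simp at h₁
  intro r r' c q h₁ h₂ h₃ h₄
  rcases eq_or_eq_of_pos_tripleProtograph_inl h₁ with rfl | rfl <;>
    rcases eq_or_eq_of_pos_tripleProtograph_inl h₃ with rfl | rfl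
  · exact .inl rfl
  · exact .inr (eq_inl_of_pos_tripleProtograph h₂ h₄).symm
  · exact .inr (eq_inl_of_pos_tripleProtograph h₄ h₂).symm
  · exact .inl rfl

lemma eq_and_eq_of_two_le_tripleProtograph {r r' : V ⊕ U} {c c' : V ⊕ B}
    (h : 2 ≤ tripleProtograph I g r c) (h' : 2 ≤ tripleProtograph I g r' c')
    (hpos : 0 < tripleProtograph I g r c') : r = r' ∧ c = c' := by
  obtain ⟨p, rfl, rfl⟩ := exists_eq_inl_of_two_le_tripleProtograph h
  obtain ⟨q, rfl, rfl⟩ := exists_eq_inl_of_two_le_tripleProtograph h'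
  rw [eq_of_pos_tripleProtograph_inl_inl hpos]
  exact ⟨rfl, rfl⟩

lemma not_hasSubpattern_tripleProtograph_of_three_le {m n : Type*} {Q : Matrix m n ℕ} {i : m}
    {j : n} (h : 3 ≤ Q i j) : ¬ HasSubpattern (tripleProtograph I g) Q := by
  rintro ⟨r, c, -, -, hle⟩
  have := tripleProtograph_le_two (I := I) (g := g) (r i) (c j)
  have := hle i j
  omega

lemma not_hasSubpattern_tripleProtograph_of_two_le {m n : Type*} {Q : Matrix m n ℕ}
    {i i' : m} {j j' : n} (hne : i ≠ i' ∨ j ≠ j') (h : 2 ≤ Q i j) (h' : 2 ≤ Q i' j')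
    (hpos : 0 < Q i j') :
    ¬ HasSubpattern (tripleProtograph I g) Q := by
  rintro ⟨r, c, hr, hc, hle⟩
  obtain ⟨hrr, hcc⟩ := eq_and_eq_of_two_le_tripleProtograph (h.trans (hle i j))
    (h'.trans (hle i' j')) (hpos.trans_le (hle i j'))
  exact hne.elim (· (hr hrr)) (· (hc hcc))

theorem avoidsLt14_submatrix_tripleProtograph
    (hI : ∀ ⦃p q b b'⦄, I p b → I q b → I p b' → I q b' → p = q ∨ b = b')
    {J L : ℕ} (eR : Fin J ≃ V ⊕ U) (eC : Fin L ≃ V ⊕ B) :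
    avoidsLt14 ((tripleProtograph I g).submatrix eR eC) := by
  have hE := rectangleFree_tripleProtograph (g := g) hI
  -- goals: `pat6`, `pat8`, `pat10`, `pat12a`, `pat12b`, `pat12c`, each followed by its transpose
  refine ⟨⟨⟨?_, ?_⟩, ?_⟩, ?_, ?_, ?_⟩ <;> apply not_containsPat_submatrix
  · exact not_hasSubpattern_tripleProtograph_of_three_le (i := 0) (j := 0) (by decide)
  · exact not_hasSubpattern_tripleProtograph_of_three_le (i := 0) (j := 0) (by decide)
  · exact not_hasSubpattern_tripleProtograph_of_two_le (i := 0) (j := 0) (i' := 0) (j' := 1)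
      (by decide) (by decide) (by decide) (by decide)
  · exact not_hasSubpattern_tripleProtograph_of_two_le (i := 0) (j := 0) (i' := 1) (j' := 0)
      (by decide) (by decide) (by decide) (by decide)
  · exact hE.not_hasSubpattern (i := 0) (i' := 1) (j := 0) (j' := 1) (by decide) (by decide)
      (by decide)
  · exact hE.not_hasSubpattern (i := 0) (i' := 1) (j := 0) (j' := 1) (by decide) (by decide)
      (by decide)
  · exact not_hasSubpattern_tripleProtograph_of_two_le (i := 0) (j := 0) (i' := 1) (j' := 1)
      (by decide) (by decide) (by decide) (by decide)
  · exact not_hasSubpattern_tripleProtograph_of_two_le (i := 1) (j := 1) (i' := 0) (j' := 0)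
      (by decide) (by decide) (by decide) (by decide)
  · exact hE.not_hasSubpattern (i := 0) (i' := 1) (j := 1) (j' := 2) (by decide) (by decide)
      (by decide)
  · exact hE.not_hasSubpattern (i := 1) (i' := 2) (j := 0) (j' := 1) (by decide) (by decide)
      (by decide)
  · exact hE.not_hasSubpattern (i := 0) (i' := 1) (j := 0) (j' := 1) (by decide) (by decide)
      (by decide)
  · exact hE.not_hasSubpattern (i := 0) (i' := 1) (j := 0) (j' := 1) (by decide) (by decide)
      (by decide)

lemma sum_tripleProtograph_col [Fintype V] [Fintype U] (h3 : ∀ b, #{p | I p b} = 3)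
    (c : V ⊕ B) : ∑ r, tripleProtograph I g r c = 3 := by
  rcases c with q | b <;> simp [Fintype.sum_sum_type, Finset.sum_boole, h3]

lemma sum_tripleProtograph_row [Fintype V] [Fintype B] {d : ℕ}
    (hV : ∀ p, #{b | I p b} + 2 = d) (hU : ∀ u, #{q | g q = u} = d) (r : V ⊕ U) :
    ∑ c, tripleProtograph I g r c = d := by
  rcases r with p | u
  · simpa [Fintype.sum_sum_type, Finset.sum_boole, add_comm] using hV p
  · simp [Fintype.sum_sum_type, Finset.sum_boole, hU]

lemma card_two_tripleProtograph [Fintype V] [Fintype U] [Fintype B] [DecidableEq B] :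
    #{x : (V ⊕ U) × (V ⊕ B) | tripleProtograph I g x.1 x.2 = 2} = Fintype.card V := by
  have : ({x : (V ⊕ U) × (V ⊕ B) | tripleProtograph I g x.1 x.2 = 2} : Finset _) = univ.map
      ⟨fun p => (.inl p, .inl p), fun p q h => Sum.inl_injective (congrArg Prod.fst h)⟩ := by
    ext ⟨r, c⟩
    simp only [mem_filter, mem_univ, true_and, mem_map]
    constructor
    · intro h
      obtain ⟨p, rfl, rfl⟩ := exists_eq_inl_of_two_le_tripleProtograph h.ge
      exact ⟨p, rfl⟩
    · rintro ⟨p, h⟩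
      cases h
      simp
  rw [this, card_map, card_univ]

end Protograph

section Reindex

variable {R C : Type*} [Fintype R] [Fintype C] {J L : ℕ}

lemma protoRegular_submatrix (E : Matrix R C ℕ) (eR : Fin J ≃ R) (eC : Fin L ≃ C)
    {dv dc : ℕ} (hcol : ∀ c, ∑ r, E r c = dv) (hrow : ∀ r, ∑ c, E r c = dc) :
    protoRegular (E.submatrix eR eC) dv dc :=
  ⟨fun l => (eR.sum_comp (E · (eC l))).trans (hcol _),
    fun j => (eC.sum_comp (E (eR j))).trans (hrow _)⟩

lemma numTwos_submatrix [DecidableEq R] [DecidableEq C] (E : Matrix R C ℕ) (eR : Fin J ≃ R)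
    (eC : Fin L ≃ C) : numTwos (E.submatrix eR eC) = #{x : R × C | E x.1 x.2 = 2} :=
  card_equiv (eR.prodCongr eC) fun x => by rw [mem_filter, mem_filter]; simp

end Reindex

lemma protoRegular.card_mul {J L dv dc : ℕ} {P : Matrix (Fin J) (Fin L) ℕ}
    (h : protoRegular P dv dc) : L * dv = J * dc :=
  calc L * dv = ∑ l, ∑ j, P j l := by simp [h.1]
    _ = ∑ j, ∑ l, P j l := sum_comm
    _ = J * dc := by simp [h.2]

lemma exists_fiber_card_eq {V : Type*} [Fintype V] {n m : ℕ} (h : Fintype.card V = n * m) :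
    ∃ g : V → Fin n, ∀ u, #{v | g v = u} = m := by
  let e : V ≃ Fin n × Fin m := Fintype.equivOfCardEq (by simp [h])
  refine ⟨fun v => (e v).1, fun u => ?_⟩
  have : ({v | (e v).1 = u} : Finset V).map e.toEmbedding = {u} ×ˢ univ := by
    ext ⟨a, b⟩
    simp [eq_comm]
  rw [← card_map e.toEmbedding, this]
  simp
section SteinerQuasigroup

variable {V : Type*}

structure IsSteinerQuasigroup (op : V → V → V) : Prop where
  idem : ∀ x, op x x = x
  comm : ∀ x y, op x y = op y x
  op_op : ∀ x y, op x (op x y) = y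

def steinerBlocks [Fintype V] [DecidableEq V] (op : V → V → V) : Finset (Finset V) :=
  univ.offDiag.image fun xy => {xy.1, xy.2, op xy.1 xy.2}

def residualBlocks [Fintype V] [DecidableEq V] (op : V → V → V) (D : Finset V) :
    Finset (Finset V) :=
  {S ∈ steinerBlocks op | Disjoint S D}

lemma triple_mem_steinerBlocks [Fintype V] [DecidableEq V] {op : V → V → V} {p q : V}
    (hpq : p ≠ q) :
    ({p, q, op p q} : Finset V) ∈ steinerBlocks op :=
  mem_image.2 ⟨(p, q), by simpa using hpq, rfl⟩

lemma mem_residualBlocks [Fintype V] [DecidableEq V] {op : V → V → V} {D S : Finset V} :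
    S ∈ residualBlocks op D ↔ S ∈ steinerBlocks op ∧ Disjoint S D :=
  mem_filter

namespace IsSteinerQuasigroup

variable {op : V → V → V}

lemma op_ne_left (h : IsSteinerQuasigroup op) {x y : V} (hxy : x ≠ y) : op x y ≠ x := by
  intro hx
  apply hxy
  rw [← h.op_op x y, hx, h.idem]

lemma op_ne_right (h : IsSteinerQuasigroup op) {x y : V} (hxy : x ≠ y) : op x y ≠ y := by
  rw [h.comm]
  exact h.op_ne_left hxy.symm

variable [DecidableEq V]

lemma card_triple (h : IsSteinerQuasigroup op) {x y : V} (hxy : x ≠ y) :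
    ({x, y, op x y} : Finset V).card = 3 := by
  rw [card_insert_of_notMem, card_pair (h.op_ne_right hxy).symm]
  simp [hxy, (h.op_ne_left hxy).symm]

lemma op_mem_triple (h : IsSteinerQuasigroup op) {x y p q : V}
    (hp : p ∈ ({x, y, op x y} : Finset V)) (hq : q ∈ ({x, y, op x y} : Finset V)) :
    op p q ∈ ({x, y, op x y} : Finset V) := by
  have h₁ : op y (op x y) = x := by rw [h.comm x, h.op_op]
  have h₂ : op (op x y) x = y := by rw [h.comm, h.op_op]
  have h₃ : op (op x y) y = x := by rw [h.comm, h₁]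
  have h₄ : op y x = op x y := h.comm y x
  simp only [mem_insert, mem_singleton] at hp hq
  rcases hp with rfl | rfl | rfl <;> rcases hq with rfl | rfl | rfl <;>
    simp [h.idem, h.op_op, h₁, h₂, h₃, h₄]

lemma mem_image_op_iff (h : IsSteinerQuasigroup op) {D : Finset V} {p q : V} :
    q ∈ D.image (op p) ↔ op p q ∈ D := by
  rw [mem_image]
  constructor
  · rintro ⟨d, hd, rfl⟩
    rwa [h.op_op]
  · exact fun hq => ⟨op p q, hq, h.op_op p q⟩

variable [Fintype V] {S D : Finset V}

lemma card_of_mem_steinerBlocks (h : IsSteinerQuasigroup op) (hS : S ∈ steinerBlocks op) :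
    S.card = 3 := by
  obtain ⟨⟨x, y⟩, hxy, rfl⟩ := mem_image.1 hS
  exact h.card_triple (mem_offDiag.1 hxy).2.2

lemma op_mem_of_mem_steinerBlocks (h : IsSteinerQuasigroup op) (hS : S ∈ steinerBlocks op)
    {p q : V} (hp : p ∈ S) (hq : q ∈ S) : op p q ∈ S := by
  obtain ⟨⟨x, y⟩, -, rfl⟩ := mem_image.1 hS
  exact h.op_mem_triple hp hq

lemma eq_triple_of_mem_steinerBlocks (h : IsSteinerQuasigroup op) (hS : S ∈ steinerBlocks op)
    {p q : V} (hp : p ∈ S) (hq : q ∈ S) (hpq : p ≠ q) : S = {p, q, op p q} := by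
  refine (eq_of_subset_of_card_le ?_ ?_).symm
  · simp [insert_subset_iff, hp, hq, h.op_mem_of_mem_steinerBlocks hS hp hq]
  · rw [h.card_of_mem_steinerBlocks hS, h.card_triple hpq]

lemma card_insert_union_image (h : IsSteinerQuasigroup op) (hD : D ∈ steinerBlocks op)
    {p : V} (hp : p ∉ D) : #(insert p (D ∪ D.image (op p))) = 7 := by
  have hdisj : Disjoint D (D.image (op p)) := by
    refine disjoint_left.2 fun d hd hd' => hp ?_
    obtain ⟨d', hd'', rfl⟩ := mem_image.1 hd'
    have : op d' (op p d') = p := by rw [h.comm p, h.op_op]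
    exact this ▸ h.op_mem_of_mem_steinerBlocks hD hd'' hd
  have hp' : p ∉ D ∪ D.image (op p) := by
    rw [mem_union, h.mem_image_op_iff, h.idem]
    exact fun hp' => hp'.elim hp hp
  rw [card_insert_of_notMem hp', card_union_of_disjoint hdisj,
    card_image_of_injective _ (LeftInverse.injective (h.op_op p)),
    h.card_of_mem_steinerBlocks hD]

lemma card_mem_residualBlocks (h : IsSteinerQuasigroup op) (hS : S ∈ residualBlocks op D) :
    #{x : {x // x ∉ D} | x.1 ∈ S} = 3 := by
  rw [mem_residualBlocks] at hS
  rw [← card_map (Embedding.subtype _), ← h.card_of_mem_steinerBlocks hS.1]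
  congr 1
  ext x
  simpa using fun hx => disjoint_left.1 hS.2 hx

lemma eq_or_eq_of_mem_residualBlocks (h : IsSteinerQuasigroup op) ⦃p q : {x // x ∉ D}⦄
    ⦃S S' : residualBlocks op D⦄ (hpS : p.1 ∈ S.1) (hqS : q.1 ∈ S.1) (hpS' : p.1 ∈ S'.1)
    (hqS' : q.1 ∈ S'.1) : p = q ∨ S = S' := by
  refine or_iff_not_imp_left.2 fun hpq => Subtype.ext ?_
  have hpq : p.1 ≠ q.1 := fun h => hpq (Subtype.ext h)
  rw [h.eq_triple_of_mem_steinerBlocks (mem_residualBlocks.1 S.2).1 hpS hqS hpq,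
    h.eq_triple_of_mem_steinerBlocks (mem_residualBlocks.1 S'.2).1 hpS' hqS' hpq]

/-- The triples through `p` that avoid `D` partition, two points each, the points other than `p`,
the points of `D` and their images under `op p`. -/
lemma two_mul_card_residualBlocks_mem_add_seven (h : IsSteinerQuasigroup op)
    (hD : D ∈ steinerBlocks op) (p : {x // x ∉ D}) :
    2 * #{S : residualBlocks op D | p.1 ∈ S.1} + 7 = Fintype.card V := by
  set T := {S ∈ residualBlocks op D | p.1 ∈ S}
  have hT : #{S : residualBlocks op D | p.1 ∈ S.1} = #T := by
    rw [← card_map (Embedding.subtype _)]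
    congr 1
    ext S
    simp [T, and_comm]
  have hT' : ∀ {S}, S ∈ T ↔ S ∈ steinerBlocks op ∧ Disjoint S D ∧ p.1 ∈ S := by
    simp [T, mem_residualBlocks, and_assoc]
  have hpair : (T : Set (Finset V)).PairwiseDisjoint (·.erase p.1) := by
    intro S hS S' hS' hne
    refine disjoint_left.2 fun q hq hq' => hne ?_
    rw [mem_erase] at hq hq'
    rw [h.eq_triple_of_mem_steinerBlocks (hT'.1 hS).1 (hT'.1 hS).2.2 hq.2 hq.1.symm,
      h.eq_triple_of_mem_steinerBlocks (hT'.1 hS').1 (hT'.1 hS').2.2 hq'.2 hq'.1.symm]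
  have hcover : T.biUnion (·.erase p.1) = (insert p.1 (D ∪ D.image (op p.1)))ᶜ := by
    ext q
    simp only [mem_biUnion, mem_erase, mem_compl, mem_insert, mem_union, h.mem_image_op_iff,
      not_or]
    constructor
    · rintro ⟨S, hS, hqp, hq⟩
      obtain ⟨hSb, hSD, hpS⟩ := hT'.1 hS
      exact ⟨hqp, disjoint_left.1 hSD hq,
        disjoint_left.1 hSD (h.op_mem_of_mem_steinerBlocks hSb hpS hq)⟩
    · rintro ⟨hqp, hqD, hpqD⟩
      refine ⟨{p.1, q, op p.1 q}, hT'.2 ⟨triple_mem_steinerBlocks (Ne.symm hqp), ?_, by simp⟩,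
        hqp, by simp⟩
      simp [disjoint_left, p.2, hqD, hpqD]
  calc 2 * #{S : residualBlocks op D | p.1 ∈ S.1} + 7
      = ∑ S ∈ T, #(S.erase p.1) + #(insert p.1 (D ∪ D.image (op p.1))) := by
        rw [hT, h.card_insert_union_image hD p.2, sum_congr rfl fun S hS => by
          rw [card_erase_of_mem (hT'.1 hS).2.2, h.card_of_mem_steinerBlocks (hT'.1 hS).1]]
        simp [mul_comm]
    _ = Fintype.card V := by rw [← card_biUnion hpair, hcover, card_compl_add_card]

end IsSteinerQuasigroup

end SteinerQuasigroup

section Bose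

variable {R : Type*} [CommRing R] [Invertible (2 : R)] [DecidableEq R]

/-- Bose's Steiner triple system on `R × ℤ/3` consists of the triples `{(a,0), (a,1), (a,2)}` and
`{(a,i), (b,i), ((a+b)/2, i+1)}` for `a ≠ b`; `boseOp x y` is the third point of the triple
through `x ≠ y`. -/
def boseOp (x y : R × ZMod 3) : R × ZMod 3 :=
  if x.1 = y.1 then (x.1, -(x.2 + y.2))
  else if x.2 = y.2 then (⅟2 * (x.1 + y.1), x.2 + 1)
  else if y.2 = x.2 + 1 then (2 * y.1 - x.1, x.2)
  else (2 * x.1 - y.1, y.2)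

lemma boseOp_same_fst (a : R) (i j : ZMod 3) : boseOp (a, i) (a, j) = (a, -(i + j)) :=
  if_pos rfl

lemma boseOp_same_snd {a b : R} (hab : a ≠ b) (i : ZMod 3) :
    boseOp (a, i) (b, i) = (⅟2 * (a + b), i + 1) := by
  simp [boseOp, hab]

lemma boseOp_snd_add_one {a b : R} (hab : a ≠ b) (i : ZMod 3) :
    boseOp (a, i) (b, i + 1) = (2 * b - a, i) := by
  have : i ≠ i + 1 := by revert i; decide
  simp [boseOp, hab, this]

lemma boseOp_add_one_snd {a b : R} (hab : a ≠ b) (i : ZMod 3) :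
    boseOp (a, i + 1) (b, i) = (2 * a - b, i) := by
  have h₁ : i + 1 ≠ i := by revert i; decide
  have h₂ : i ≠ i + 1 + 1 := by revert i; decide
  simp [boseOp, hab, h₁, h₂]

lemma zmod_three_trichotomy (i j : ZMod 3) : j = i ∨ j = i + 1 ∨ i = j + 1 := by
  revert i j; decide

lemma isSteinerQuasigroup_boseOp : IsSteinerQuasigroup (boseOp (R := R)) where
  idem := by
    rintro ⟨a, i⟩
    rw [boseOp_same_fst]
    congr 1
    revert i; decide
  comm := by
    rintro ⟨a, i⟩ ⟨b, j⟩
    by_cases hab : a = b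
    · subst hab
      rw [boseOp_same_fst, boseOp_same_fst, add_comm]
    rcases zmod_three_trichotomy i j with rfl | rfl | rfl
    · rw [boseOp_same_snd hab, boseOp_same_snd (Ne.symm hab), add_comm a]
    · rw [boseOp_snd_add_one hab, boseOp_add_one_snd (Ne.symm hab)]
    · rw [boseOp_add_one_snd hab, boseOp_snd_add_one (Ne.symm hab)]
  op_op := by
    rintro ⟨a, i⟩ ⟨b, j⟩
    by_cases hab : a = b
    · subst hab
      rw [boseOp_same_fst, boseOp_same_fst]
      congr 1
      ring
    rcases zmod_three_trichotomy i j with rfl | rfl | rfl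
    · have hne : a ≠ ⅟2 * (a + b) := fun h =>
        hab <| (isUnit_of_invertible (2 : R)).mul_left_cancel <| by
        linear_combination 2 * (congrArg (2 * ·) h).trans (mul_invOf_cancel_left 2 (a + b))
      rw [boseOp_same_snd hab, boseOp_snd_add_one hne, mul_invOf_cancel_left]
      congr 1
      ring
    · have hne : a ≠ 2 * b - a := fun h =>
        hab <| (isUnit_of_invertible (2 : R)).mul_left_cancel <| by linear_combination h
      rw [boseOp_snd_add_one hab, boseOp_same_snd hne, show a + (2 * b - a) = 2 * b by ring,
        invOf_mul_cancel_left]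
    · have hne : a ≠ 2 * a - b := fun h => hab <| by linear_combination -h
      rw [boseOp_add_one_snd hab, boseOp_add_one_snd hne]
      congr 1
      ring

end Bose

theorem exists_protograph_of_isSteinerQuasigroup {V : Type*} [Fintype V] [DecidableEq V]
    {op : V → V → V} (hop : IsSteinerQuasigroup op) {k : ℕ}
    (hV : Fintype.card V = 6 * k + 3) :
    ∃ (L : ℕ) (P : Matrix (Fin (6 * k + 2)) (Fin L) ℕ), 3 * L = (6 * k + 2) * (3 * k) ∧
      protoRegular P 3 (3 * k) ∧ numTwos P = 6 * k ∧ avoidsLt14 P := by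
  obtain ⟨a, b, hab⟩ := Fintype.exists_pair_of_one_lt_card (by omega : 1 < Fintype.card V)
  set D : Finset V := {a, b, op a b}
  have hD : D ∈ steinerBlocks op := triple_mem_steinerBlocks hab
  have hpts : Fintype.card {x // x ∉ D} = 2 * (3 * k) := by
    rw [Fintype.card_subtype_compl, hV, Fintype.card_coe, hop.card_of_mem_steinerBlocks hD]
    omega
  obtain ⟨g, hg⟩ := exists_fiber_card_eq hpts
  set E := tripleProtograph (fun (p : {x // x ∉ D}) (S : residualBlocks op D) => p.1 ∈ S.1) g
  let eR : Fin (6 * k + 2) ≃ {x // x ∉ D} ⊕ Fin 2 :=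
    (Fintype.equivFinOfCardEq (by rw [Fintype.card_sum, hpts, Fintype.card_fin]; ring)).symm
  set eC := (Fintype.equivFin ({x // x ∉ D} ⊕ residualBlocks op D)).symm
  have hreg : protoRegular (E.submatrix eR eC) 3 (3 * k) :=
    protoRegular_submatrix E eR eC
      (sum_tripleProtograph_col fun S => hop.card_mem_residualBlocks S.2)
      (sum_tripleProtograph_row (fun p => by
        have := hop.two_mul_card_residualBlocks_mem_add_seven hD p; omega) hg)
  refine ⟨_, E.submatrix eR eC, ?_, hreg, ?_,
    avoidsLt14_submatrix_tripleProtograph hop.eq_or_eq_of_mem_residualBlocks eR eC⟩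
  · rw [mul_comm, hreg.card_mul]
  · rw [numTwos_submatrix, card_two_tripleProtograph, hpts]
    ring

theorem stmt_12_general (J : ℕ) (hmod : J % 6 = 2) :
    ∃ (L : ℕ) (P : Matrix (Fin J) (Fin L) ℕ),
      6 * L = J * (J - 2) ∧
      protoRegular P 3 ((J - 2) / 2) ∧
      numTwos P = J - 2 ∧
      avoidsLt14 P := by
  obtain ⟨k, rfl⟩ : ∃ k, J = 6 * k + 2 := ⟨J / 6, by omega⟩
  let _ : Invertible (2 : ZMod (2 * k + 1)) :=
    (by simpa using (ZMod.isUnit_iff_coprime 2 (2 * k + 1)).2 (by simp) : IsUnit _).invertible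
  have hcard : Fintype.card (ZMod (2 * k + 1) × ZMod 3) = 6 * k + 3 := by
    rw [Fintype.card_prod, ZMod.card, ZMod.card]
    ring
  obtain ⟨L, P, hL, hreg, htwos, havoid⟩ :=
    exists_protograph_of_isSteinerQuasigroup isSteinerQuasigroup_boseOp hcard
  refine ⟨L, P, ?_, by rwa [show (6 * k + 2 - 2) / 2 = 3 * k by omega], by rw [htwos]; omega,
    havoid⟩
  rw [show 6 * k + 2 - 2 = 2 * (3 * k) by omega]
  linear_combination 2 * hL

theorem stmt_12 (J : ℕ) (hmod : J % 6 = 2) (hJ : 14 ≤ J) :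
    ∃ (L : ℕ) (P : Matrix (Fin J) (Fin L) ℕ),
      6 * L = J * (J - 2) ∧
      protoRegular P 3 ((J - 2) / 2) ∧
      numTwos P = J - 2 ∧
      avoidsLt14 P :=
  stmt_12_general J hmod
end

section
/- There exists a 6×8 protograph P with all entries in {0,1,2} such that P is (3,4)-regular (every column sums to 3 and every row sums to 4), P has exactly 6 entries equal to 2, and P avoids inevitable cycles of length less than 12, i.e., P contains none of the ICI patterns of length 6, 8, or 10 (nor their transposes). -/
open Matrix Finset

/-! The patterns of length `< 12` are at most `2 × 2`, so avoiding them only asks that the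
entries be at most `2`, that no row or column hold two `2`s, and that no `2` be the corner of a
`2 × 2` submatrix with positive entries; the protograph of Fig. 7(b) is checked against these
conditions directly. -/

section Patterns

variable {J L : ℕ} (P : Matrix (Fin J) (Fin L) ℕ)

theorem containsSub_one_one_iff (Q : Matrix (Fin 1) (Fin 1) ℕ) :
    containsSub P Q ↔ ∃ i j, Q 0 0 ≤ P i j := by
  constructor
  · rintro ⟨r, c, -, -, h⟩
    exact ⟨r 0, c 0, h 0 0⟩
  · rintro ⟨i, j, h⟩
    refine ⟨![i], ![j], Function.injective_of_subsingleton _,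
      Function.injective_of_subsingleton _, ?_⟩
    intro a b
    fin_cases a; fin_cases b
    exact h

theorem containsSub_one_two_iff (Q : Matrix (Fin 1) (Fin 2) ℕ) :
    containsSub P Q ↔
      ∃ i j₁ j₂, j₁ ≠ j₂ ∧ Q 0 0 ≤ P i j₁ ∧ Q 0 1 ≤ P i j₂ := by
  constructor
  · rintro ⟨r, c, -, hc, h⟩
    exact ⟨r 0, c 0, c 1, hc.ne Fin.zero_ne_one, h 0 0, h 0 1⟩
  · rintro ⟨i, j₁, j₂, hj, h₁, h₂⟩
    refine ⟨![i], ![j₁, j₂], Function.injective_of_subsingleton _,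
      injective_pair_iff_ne.2 hj, ?_⟩
    intro a b
    fin_cases a; fin_cases b
    exacts [h₁, h₂]

theorem containsSub_two_two_iff (Q : Matrix (Fin 2) (Fin 2) ℕ) :
    containsSub P Q ↔
      ∃ i₁ i₂ j₁ j₂, i₁ ≠ i₂ ∧ j₁ ≠ j₂ ∧ Q 0 0 ≤ P i₁ j₁ ∧ Q 0 1 ≤ P i₁ j₂ ∧
        Q 1 0 ≤ P i₂ j₁ ∧ Q 1 1 ≤ P i₂ j₂ := by
  constructor
  · rintro ⟨r, c, hr, hc, h⟩
    exact ⟨r 0, r 1, c 0, c 1, hr.ne Fin.zero_ne_one, hc.ne Fin.zero_ne_one,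
      h 0 0, h 0 1, h 1 0, h 1 1⟩
  · rintro ⟨i₁, i₂, j₁, j₂, hi, hj, h₀₀, h₀₁, h₁₀, h₁₁⟩
    refine ⟨![i₁, i₂], ![j₁, j₂], injective_pair_iff_ne.2 hi, injective_pair_iff_ne.2 hj, ?_⟩
    intro a b
    fin_cases a <;> fin_cases b
    exacts [h₀₀, h₀₁, h₁₀, h₁₁]

theorem containsSub_transpose_iff {m n : ℕ} (Q : Matrix (Fin m) (Fin n) ℕ) :
    containsSub P Qᵀ ↔ containsSub Pᵀ Q := by
  constructor <;> exact fun ⟨r, c, hr, hc, h⟩ ↦ ⟨c, r, hc, hr, fun i j ↦ h j i⟩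

theorem containsPat_iff {m n : ℕ} (Q : Matrix (Fin m) (Fin n) ℕ) :
    containsPat P Q ↔ containsSub P Q ∨ containsSub Pᵀ Q := by
  rw [containsPat, containsSub_transpose_iff]

theorem pat10_transpose : pat10ᵀ = pat10 := by
  ext i j
  fin_cases i <;> fin_cases j <;> rfl

theorem avoidsLt12_of_forall
    (h2 : ∀ i j, P i j ≤ 2)
    (hrow : ∀ i j₁ j₂, j₁ ≠ j₂ → ¬ (2 ≤ P i j₁ ∧ 2 ≤ P i j₂))
    (hcol : ∀ j i₁ i₂, i₁ ≠ i₂ → ¬ (2 ≤ P i₁ j ∧ 2 ≤ P i₂ j))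
    (h10 : ∀ i₁ i₂ j₁ j₂, i₁ ≠ i₂ → j₁ ≠ j₂ →
      ¬ (2 ≤ P i₁ j₁ ∧ 1 ≤ P i₁ j₂ ∧ 1 ≤ P i₂ j₁ ∧ 1 ≤ P i₂ j₂)) :
    avoidsLt12 P := by
  refine ⟨⟨?_, ?_⟩, ?_⟩
  · rw [containsPat_iff, containsSub_one_one_iff, containsSub_one_one_iff]
    rintro (⟨i, j, h⟩ | ⟨i, j, h⟩)
    · exact absurd (h.trans (h2 i j)) (by decide)
    · exact absurd (h.trans (h2 j i)) (by decide)
  · rw [containsPat_iff, containsSub_one_two_iff, containsSub_one_two_iff]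
    rintro (⟨i, j₁, j₂, hj, h⟩ | ⟨j, i₁, i₂, hi, h⟩)
    · exact hrow i j₁ j₂ hj h
    · exact hcol j i₁ i₂ hi h
  · rw [containsPat, pat10_transpose, or_self, containsSub_two_two_iff]
    rintro ⟨i₁, i₂, j₁, j₂, hi, hj, h⟩
    exact h10 i₁ i₂ j₁ j₂ hi hj h

end Patterns

def fig7b : Matrix (Fin 6) (Fin 8) ℕ :=
  !![1, 0, 1, 0, 0, 0, 0, 2;
     1, 0, 0, 1, 0, 0, 2, 0;
     0, 1, 1, 0, 2, 0, 0, 0;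
     0, 0, 0, 2, 1, 0, 0, 1;
     0, 2, 0, 0, 0, 1, 1, 0;
     1, 0, 1, 0, 0, 2, 0, 0]

/- Instance search fails to decide quantified statements about entries `P i j` of a `Matrix`
when `i` is bound, so the checks below first unfold `fig7b` to a function `Fin 6 → Fin 8 → ℕ`. -/
theorem fig7b_le_two : ∀ i j, fig7b i j ≤ 2 := by
  simp only [fig7b, of_apply]
  decide

theorem fig7b_avoidsLt12 : avoidsLt12 fig7b := by
  refine avoidsLt12_of_forall _ fig7b_le_two ?_ ?_ ?_ <;> simp only [fig7b, of_apply] <;> decide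

theorem stmt_14 :
    ∃ P : Matrix (Fin 6) (Fin 8) ℕ,
      (∀ i j, P i j ≤ 2) ∧
      protoRegular P 3 4 ∧
      numTwos P = 6 ∧
      avoidsLt12 P :=
  ⟨fig7b, fig7b_le_two, ⟨by decide, by decide⟩, by decide, fig7b_avoidsLt12⟩
end
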